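/- arXiv:1409.6925 — 10 statements merged into one kernel-verified Lean document; each statement's English description precedes it below -/
import Mathlib

section
/- For every c with 0 ≤ c ≤ c̄ there exists a Lipschitz function u : ℝ² → ℝ with u(x) ≥ 0 on [c,c+1]² and partial derivatives in [0,1] almost everywhere on [c,c+1]², such that Rev_c(u) = Opt(c). -/
open MeasureTheory Real Set

/-- Partial derivative of `u` with respect to the first coordinate
(defined via `deriv`; for Lipschitz `u` it exists a.e. by Rademacher). -/
noncomputable def pd1 (u : ℝ × ℝ → ℝ) (x : ℝ × ℝ) : ℝ := deriv (fun t => u (t, x.2)) x.1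

/-- Partial derivative of `u` with respect to the second coordinate. -/
noncomputable def pd2 (u : ℝ × ℝ → ℝ) (x : ℝ × ℝ) : ℝ := deriv (fun t => u (x.1, t)) x.2

/-- The square `[c, c+1]²`. -/
def box (c : ℝ) : Set (ℝ × ℝ) := Icc c (c + 1) ×ˢ Icc c (c + 1)

/-- The revenue of the (relaxed) mechanism induced by utility `u`:
`∫_{[c,c+1]²} (x₁ ∂u/∂x₁ + x₂ ∂u/∂x₂ − u)`. -/
noncomputable def Rev (c : ℝ) (u : ℝ × ℝ → ℝ) : ℝ :=
  ∫ x in box c, (x.1 * pd1 u x + x.2 * pd2 u x - u x)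

/-- `Opt(c)`, the optimal value of the convexity-relaxed program for `0 ≤ c ≤ c̄`. -/
noncomputable def Opt (c : ℝ) : ℝ :=
  2 / 27 * ((Real.sqrt 2 - 4) * c ^ 3
    + 3 * (Real.sqrt (c * (3 * c + 2)) + Real.sqrt 2 + 1) * c ^ 2
    + (2 * Real.sqrt (c * (3 * c + 2)) + 3 * Real.sqrt 2 + 12) * c
    + Real.sqrt 2 + 6)

/-- `BRev(c)`, the best full-bundling revenue. -/
noncomputable def BRev (c : ℝ) : ℝ :=
  2 / 27 * (-4 * c ^ 3 + Real.sqrt 2 * Real.sqrt ((2 * c ^ 2 + 3) ^ 3) + 18 * c)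

/-- The critical constant `c̄ = √(15 − 8√2) − 2√2 + 1 ≈ 0.0915`. -/
noncomputable def cbar : ℝ := Real.sqrt (15 - 8 * Real.sqrt 2) - 2 * Real.sqrt 2 + 1

/-!
Let types with `min x < r` buy both items for `a + r`, types with `r < min x < r₂` buy each item
separately for `a`, and types with `min x > r₂` buy both items for `a + r₂` (each only when the
value exceeds the price), where `a = 2(c+1)/3`, `r = (2c + √(c(3c+2)))/3` and
`r₂ = (2-√2)(c+1)/3`; for `c ≥ 0` the hypothesis `c ≤ c̄` says exactly that `r ≤ r₂`.
The resulting utility `u` is Lipschitz, and off finitely many lines it is locally affine,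
`u = α x₁ + β x₂ - k` with `α, β ∈ {0, 1}`, so that `x₁ ∂₁u + x₂ ∂₂u - u = k` is the price paid.
Hence `Rev_c(u)` is the integral of a piecewise constant price over the square, which Fubini
reduces to one-dimensional integrals of step functions.
-/

open Topology

noncomputable def itemPrice (c : ℝ) : ℝ := 2 * (c + 1) / 3

noncomputable def lowCut (c : ℝ) : ℝ := (2 * c + √(c * (3 * c + 2))) / 3

noncomputable def highCut (c : ℝ) : ℝ := (2 - √2) * (c + 1) / 3

noncomputable def utility (c : ℝ) (x : ℝ × ℝ) : ℝ :=
  max 0 (max (x.1 + x.2 - (itemPrice c + highCut c))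
    (min (x.1 + x.2 - (itemPrice c + lowCut c)) (max x.1 x.2 - itemPrice c)))

noncomputable def price (c : ℝ) (x : ℝ × ℝ) : ℝ :=
  if min x.1 x.2 < lowCut c then
    if itemPrice c + lowCut c < x.1 + x.2 then itemPrice c + lowCut c else 0
  else if min x.1 x.2 < highCut c then
    if itemPrice c < max x.1 x.2 then itemPrice c else 0
  else if itemPrice c + highCut c < x.1 + x.2 then itemPrice c + highCut c else 0

structure CutoffsOrdered (c : ℝ) : Prop where
  le_lowCut : c ≤ lowCut c
  lowCut_le_highCut : lowCut c ≤ highCut c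
  highCut_le_itemPrice : highCut c ≤ itemPrice c
  itemPrice_add_lowCut_le : itemPrice c + lowCut c ≤ 2 * c + 1

section Cutoffs

variable {c : ℝ}

lemma cbar_isRoot : cbar ^ 2 + (4 * √2 - 2) * cbar + (4 * √2 - 6) = 0 := by
  have h2 : √2 ^ 2 = 2 := sq_sqrt zero_le_two
  have h15 : √(15 - 8 * √2) ^ 2 = 15 - 8 * √2 :=
    sq_sqrt (by nlinarith [sqrt_nonneg 2])
  unfold cbar
  linear_combination h15 - 4 * h2

lemma lowCut_le_highCut (hc0 : 0 ≤ c) (hc1 : c ≤ cbar) : lowCut c ≤ highCut c := by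
  have h2 : √2 ^ 2 = 2 := sq_sqrt zero_le_two
  have hs : 1.41 ≤ √2 := by nlinarith [sqrt_nonneg 2]
  -- `c̄` is the positive root of this quadratic, which increases on `[0, ∞)`
  have hquad : c ^ 2 + (4 * √2 - 2) * c + (4 * √2 - 6) ≤ 0 := by
    nlinarith [cbar_isRoot,
      mul_nonneg (sub_nonneg.2 hc1) (by linarith : 0 ≤ cbar + c + (4 * √2 - 2))]
  have hR : 0 ≤ (2 - √2) * (c + 1) - 2 * c := by nlinarith
  have hd : √(c * (3 * c + 2)) ≤ (2 - √2) * (c + 1) - 2 * c :=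
    (sqrt_le_left hR).2 (by nlinarith)
  unfold lowCut highCut
  linarith

lemma cutoffsOrdered_of_le_cbar (hc0 : 0 ≤ c) (hc1 : c ≤ cbar) : CutoffsOrdered c := by
  have hd : √(c * (3 * c + 2)) ^ 2 = c * (3 * c + 2) := sq_sqrt (by positivity)
  have hd0 := sqrt_nonneg (c * (3 * c + 2))
  refine ⟨?_, lowCut_le_highCut hc0 hc1, ?_, ?_⟩ <;> simp only [lowCut, highCut, itemPrice]
  · nlinarith
  · nlinarith [sqrt_nonneg 2]
  · nlinarith

end Cutoffs

section LocallyAffine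

variable {u : ℝ × ℝ → ℝ} {p : ℝ × ℝ} {α β k : ℝ}

lemma integrand_of_eventuallyEq_affine (h : u =ᶠ[𝓝 p] fun q => α * q.1 + β * q.2 - k) :
    pd1 u p = α ∧ pd2 u p = β ∧ p.1 * pd1 u p + p.2 * pd2 u p - u p = k := by
  have h₁ : pd1 u p = α := by
    have hl : HasDerivAt (fun t => α * t + β * p.2 - k) α p.1 := by
      simpa using ((hasDerivAt_id p.1).const_mul α).add_const (β * p.2) |>.sub_const k
    exact (h.comp_tendsto ((Continuous.prodMk_left p.2).tendsto p.1)).deriv_eq.trans hl.deriv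
  have h₂ : pd2 u p = β := by
    have hl : HasDerivAt (fun t => α * p.1 + β * t - k) β p.2 := by
      simpa using (((hasDerivAt_id p.2).const_mul β).const_add (α * p.1)).sub_const k
    exact (h.comp_tendsto ((Continuous.prodMk_right p.1).tendsto p.2)).deriv_eq.trans hl.deriv
  refine ⟨h₁, h₂, ?_⟩
  rw [h₁, h₂, h.eq_of_nhds]
  ring

lemma integrand_of_eqOn_max_zero {s : Set (ℝ × ℝ)} (hs : IsOpen s) (hp : p ∈ s)
    (hα : α ∈ Icc (0 : ℝ) 1) (hβ : β ∈ Icc (0 : ℝ) 1)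
    (hu : ∀ q ∈ s, u q = max 0 (α * q.1 + β * q.2 - k)) (hk : α * p.1 + β * p.2 ≠ k) :
    pd1 u p ∈ Icc (0 : ℝ) 1 ∧ pd2 u p ∈ Icc (0 : ℝ) 1 ∧
      p.1 * pd1 u p + p.2 * pd2 u p - u p = if k < α * p.1 + β * p.2 then k else 0 := by
  have hℓ : Continuous fun q : ℝ × ℝ => α * q.1 + β * q.2 := by fun_prop
  rcases hk.lt_or_gt with hlt | hgt
  · have hev : u =ᶠ[𝓝 p] fun q => 0 * q.1 + 0 * q.2 - 0 := by
      filter_upwards [hs.mem_nhds hp, hℓ.continuousAt.eventually_lt continuousAt_const hlt]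
        with q hqs hq
      rw [hu q hqs, max_eq_left (by linarith)]
      ring
    obtain ⟨h₁, h₂, h₃⟩ := integrand_of_eventuallyEq_affine hev
    rw [if_neg hlt.not_gt]
    exact ⟨by rw [h₁]; norm_num, by rw [h₂]; norm_num, h₃⟩
  · have hev : u =ᶠ[𝓝 p] fun q => α * q.1 + β * q.2 - k := by
      filter_upwards [hs.mem_nhds hp, continuousAt_const.eventually_lt hℓ.continuousAt hgt]
        with q hqs hq
      rw [hu q hqs, max_eq_right (by linarith)]
    obtain ⟨h₁, h₂, h₃⟩ := integrand_of_eventuallyEq_affine hev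
    rw [if_pos hgt]
    exact ⟨by rwa [h₁], by rwa [h₂], h₃⟩

end LocallyAffine

lemma ae_fst_ne (k : ℝ) : ∀ᵐ p : ℝ × ℝ, p.1 ≠ k :=
  Measure.quasiMeasurePreserving_fst.ae (Measure.ae_ne volume k)

lemma ae_snd_ne {f : ℝ → ℝ} (hf : Measurable f) : ∀ᵐ p : ℝ × ℝ, p.2 ≠ f p.1 := by
  have hs : MeasurableSet {p : ℝ × ℝ | p.2 ≠ f p.1} :=
    (measurableSet_eq_fun measurable_snd (hf.comp measurable_fst)).compl
  rw [Measure.volume_eq_prod, Measure.ae_prod_iff_ae_ae hs]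
  exact .of_forall fun x => Measure.ae_ne volume (f x)

lemma exists_lipschitzWith_utility (c : ℝ) : ∃ K, LipschitzWith K (utility c) :=
  have hsum (k : ℝ) :=
    (LipschitzWith.prod_fst.add LipschitzWith.prod_snd).sub (LipschitzWith.const k)
  have hmax := lipschitzWith_max.sub (LipschitzWith.const (itemPrice c))
  ⟨_, ((hsum _).max ((hsum _).min hmax)).const_max 0⟩

lemma utility_nonneg (c : ℝ) (x : ℝ × ℝ) : 0 ≤ utility c x := le_max_left _ _

section Zones

variable {c : ℝ} {x : ℝ × ℝ}

lemma utility_of_min_lt_lowCut (hc : lowCut c ≤ highCut c) (hx : min x.1 x.2 < lowCut c) :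
    utility c x = max 0 (x.1 + x.2 - (itemPrice c + lowCut c)) := by
  have := min_add_max x.1 x.2
  simp only [utility]
  congr 1
  rw [min_eq_left (by linarith), max_eq_right (by linarith)]

lemma utility_of_lowCut_lt_min (hx₁ : lowCut c < min x.1 x.2) (hx₂ : min x.1 x.2 < highCut c) :
    utility c x = max 0 (max x.1 x.2 - itemPrice c) := by
  have := min_add_max x.1 x.2
  simp only [utility]
  congr 1
  rw [min_eq_right (by linarith), max_eq_right (by linarith)]

lemma utility_of_highCut_lt_min (hc : lowCut c ≤ highCut c) (hx : highCut c < min x.1 x.2) :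
    utility c x = max 0 (x.1 + x.2 - (itemPrice c + highCut c)) := by
  have := min_add_max x.1 x.2
  simp only [utility]
  congr 1
  rw [min_eq_right (by linarith), max_eq_left (by linarith)]

lemma integrand_utility_eq_price (hc : lowCut c ≤ highCut c) {p : ℝ × ℝ} (h₁ : p.1 ≠ p.2)
    (h₂ : p.1 + p.2 ≠ itemPrice c + lowCut c) (h₃ : p.1 + p.2 ≠ itemPrice c + highCut c)
    (h₄ : min p.1 p.2 ≠ lowCut c) (h₅ : min p.1 p.2 ≠ highCut c) (h₆ : max p.1 p.2 ≠ itemPrice c) :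
    pd1 (utility c) p ∈ Icc (0 : ℝ) 1 ∧ pd2 (utility c) p ∈ Icc (0 : ℝ) 1 ∧
      p.1 * pd1 (utility c) p + p.2 * pd2 (utility c) p - utility c p = price c p := by
  have hmin : Continuous fun q : ℝ × ℝ => min q.1 q.2 := by fun_prop
  have hI : (1 : ℝ) ∈ Icc (0 : ℝ) 1 := right_mem_Icc.2 zero_le_one
  have hO : (0 : ℝ) ∈ Icc (0 : ℝ) 1 := left_mem_Icc.2 zero_le_one
  rcases h₄.lt_or_gt with hr | hr
  · have := integrand_of_eqOn_max_zero (isOpen_lt hmin continuous_const) hr hI hI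
      (fun q hq => by simpa using utility_of_min_lt_lowCut hc hq) (by simpa using h₂)
    simpa only [price, if_pos hr, one_mul] using this
  rcases h₅.lt_or_gt with hs | hs
  · have hopen : IsOpen {q : ℝ × ℝ | lowCut c < min q.1 q.2 ∧ min q.1 q.2 < highCut c} :=
      (isOpen_lt continuous_const hmin).inter (isOpen_lt hmin continuous_const)
    have hprice : price c p = if itemPrice c < max p.1 p.2 then itemPrice c else 0 := by
      rw [price, if_neg hr.not_gt, if_pos hs]
    rcases h₁.lt_or_gt with hlt | hgt
    · have hu (q : ℝ × ℝ)
          (hq : (lowCut c < min q.1 q.2 ∧ min q.1 q.2 < highCut c) ∧ q.1 < q.2) :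
          utility c q = max 0 (0 * q.1 + 1 * q.2 - itemPrice c) := by
        rw [utility_of_lowCut_lt_min hq.1.1 hq.1.2, max_eq_right hq.2.le]
        ring_nf
      have := integrand_of_eqOn_max_zero (hopen.inter (isOpen_lt continuous_fst continuous_snd))
        ⟨⟨hr, hs⟩, hlt⟩ hO hI hu (by simpa [max_eq_right hlt.le] using h₆)
      simpa [hprice, max_eq_right hlt.le] using this
    · have hu (q : ℝ × ℝ)
          (hq : (lowCut c < min q.1 q.2 ∧ min q.1 q.2 < highCut c) ∧ q.2 < q.1) :
          utility c q = max 0 (1 * q.1 + 0 * q.2 - itemPrice c) := by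
        rw [utility_of_lowCut_lt_min hq.1.1 hq.1.2, max_eq_left hq.2.le]
        ring_nf
      have := integrand_of_eqOn_max_zero (hopen.inter (isOpen_lt continuous_snd continuous_fst))
        ⟨⟨hr, hs⟩, hgt⟩ hI hO hu (by simpa [max_eq_left hgt.le] using h₆)
      simpa [hprice, max_eq_left hgt.le] using this
  · have := integrand_of_eqOn_max_zero (isOpen_lt continuous_const hmin) hs hI hI
      (fun q hq => by simpa using utility_of_highCut_lt_min hc hq) (by simpa using h₃)
    simpa only [price, if_neg hr.not_gt, if_neg hs.not_gt, one_mul] using this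

lemma ae_integrand_utility_eq_price (hc : lowCut c ≤ highCut c) :
    ∀ᵐ p : ℝ × ℝ, pd1 (utility c) p ∈ Icc (0 : ℝ) 1 ∧ pd2 (utility c) p ∈ Icc (0 : ℝ) 1 ∧
      p.1 * pd1 (utility c) p + p.2 * pd2 (utility c) p - utility c p = price c p := by
  have hconst (k : ℝ) : ∀ᵐ p : ℝ × ℝ, p.1 ≠ k ∧ p.2 ≠ k :=
    (ae_fst_ne k).and (ae_snd_ne (f := fun _ => k) measurable_const)
  filter_upwards [ae_snd_ne measurable_id,
    ae_snd_ne (measurable_const_sub (itemPrice c + lowCut c)),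
    ae_snd_ne (measurable_const_sub (itemPrice c + highCut c)),
    hconst (lowCut c), hconst (highCut c), hconst (itemPrice c)] with p hd h₁ h₂ hr hs ha
  refine integrand_utility_eq_price hc (Ne.symm hd) ?_ ?_ (min_rec' (· ≠ _) hr.1 hr.2)
    (min_rec' (· ≠ _) hs.1 hs.2) (max_rec' (· ≠ _) ha.1 ha.2)
  · contrapose! h₁; linarith
  · contrapose! h₂; linarith

end Zones

lemma measurable_price (c : ℝ) : Measurable (price c) := by
  unfold price
  refine .ite ?_ (.ite ?_ measurable_const measurable_const) (.ite ?_
    (.ite ?_ measurable_const measurable_const) (.ite ?_ measurable_const measurable_const))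
  all_goals exact measurableSet_lt (by fun_prop) (by fun_prop)

lemma integrableOn_price_box (c : ℝ) : IntegrableOn (price c) (box c) := by
  refine Measure.integrableOn_of_bounded (M := |itemPrice c + lowCut c| + |itemPrice c| +
    |itemPrice c + highCut c|) ?_ (measurable_price c).aestronglyMeasurable (.of_forall fun x => ?_)
  · rw [box, Measure.volume_eq_prod, Measure.prod_prod]
    simp
  · have := abs_nonneg (itemPrice c + lowCut c)
    have := abs_nonneg (itemPrice c)
    have := abs_nonneg (itemPrice c + highCut c)
    rw [Real.norm_eq_abs]
    unfold price
    split_ifs <;> (try rw [abs_zero]) <;> linarith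

lemma rev_utility_eq_integral_price {c : ℝ} (hc : lowCut c ≤ highCut c) :
    Rev c (utility c) = ∫ x in c..c + 1, ∫ y in c..c + 1, price c (x, y) := by
  have hc1 : c ≤ c + 1 := by linarith
  rw [Rev, integral_congr_ae (ae_restrict_of_ae ((ae_integrand_utility_eq_price hc).mono
    fun p hp => hp.2.2)), box, Measure.volume_eq_prod,
    setIntegral_prod _ (integrableOn_price_box c), intervalIntegral.integral_of_le hc1,
    ← integral_Icc_eq_integral_Ioc]
  simp_rw [intervalIntegral.integral_of_le hc1, integral_Icc_eq_integral_Ioc]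

section StepIntegrals

variable {f : ℝ → ℝ} {a b : ℝ}

lemma integral_eq_of_eqOn_Ioo_affine {k₀ k₁ : ℝ} (hab : a ≤ b)
    (h : EqOn f (fun x => k₀ + k₁ * x) (Ioo a b)) :
    IntervalIntegrable f volume a b ∧
      ∫ x in a..b, f x = k₀ * (b - a) + k₁ * (b ^ 2 - a ^ 2) / 2 := by
  have hae : ∀ᵐ x, x ∈ uIoc a b → f x = k₀ + k₁ * x := by
    filter_upwards [Measure.ae_ne volume b] with x hxb hx
    rw [uIoc_of_le hab] at hx
    exact h ⟨hx.1, hx.2.lt_of_ne hxb⟩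
  have hℓ : IntervalIntegrable (fun x => k₀ + k₁ * x) volume a b :=
    (continuous_const.add (continuous_const.mul continuous_id)).intervalIntegrable a b
  refine ⟨hℓ.congr_ae ?_, ?_⟩
  · exact ((ae_restrict_iff' measurableSet_uIoc).2 hae).mono fun x hx => hx.symm
  · rw [intervalIntegral.integral_congr_ae hae,
      intervalIntegral.integral_add intervalIntegrable_const
        (intervalIntegral.intervalIntegrable_id.const_mul k₁),
      intervalIntegral.integral_const_mul, integral_id, intervalIntegral.integral_const,
      smul_eq_mul]
    ring

lemma integral_eq_of_eqOn_Ioo_const {k : ℝ} (hab : a ≤ b) (h : EqOn f (fun _ => k) (Ioo a b)) :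
    IntervalIntegrable f volume a b ∧ ∫ x in a..b, f x = k * (b - a) := by
  simpa using integral_eq_of_eqOn_Ioo_affine (k₁ := 0) hab (by simpa using h)

end StepIntegrals

section SliceIntegrals

lemma integral_price_slice_of_forall_Ioo (c x k a b : ℝ) (hab : a ≤ b)
    (h : ∀ y ∈ Ioo a b, price c (x, y) = k) :
    IntervalIntegrable (fun y => price c (x, y)) volume a b ∧
      ∫ y in a..b, price c (x, y) = k * (b - a) :=
  integral_eq_of_eqOn_Ioo_const hab h

variable {c x : ℝ}

lemma integral_price_slice_of_lt_lowCut (h : CutoffsOrdered c) (hx₁ : c < x)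
    (hx₂ : x < lowCut c) :
    ∫ y in c..c + 1, price c (x, y) =
      (itemPrice c + lowCut c) * (x + c + 1 - (itemPrice c + lowCut c)) := by
  obtain ⟨h₁, h₂, h₃, h₄⟩ := h
  obtain ⟨I₁, e₁⟩ := integral_price_slice_of_forall_Ioo c x 0 c (itemPrice c + lowCut c - x)
    (by linarith) fun y hy => by
      simp only [price, min_def, max_def]; split_ifs <;> linarith [hy.1, hy.2]
  obtain ⟨I₂, e₂⟩ := integral_price_slice_of_forall_Ioo c x (itemPrice c + lowCut c)
    (itemPrice c + lowCut c - x) (c + 1) (by linarith) fun y hy => by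
      simp only [price, min_def, max_def]; split_ifs <;> linarith [hy.1, hy.2]
  rw [← intervalIntegral.integral_add_adjacent_intervals I₁ I₂, e₁, e₂]
  ring

lemma integral_price_slice_of_lowCut_lt_of_lt_highCut (h : CutoffsOrdered c)
    (hx₁ : lowCut c < x) (hx₂ : x < highCut c) :
    ∫ y in c..c + 1, price c (x, y) = itemPrice c * (c + 1 - itemPrice c) := by
  obtain ⟨h₁, h₂, h₃, h₄⟩ := h
  obtain ⟨I₁, e₁⟩ := integral_price_slice_of_forall_Ioo c x 0 c (itemPrice c)
    (by linarith) fun y hy => by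
      simp only [price, min_def, max_def]; split_ifs <;> linarith [hy.1, hy.2]
  obtain ⟨I₂, e₂⟩ := integral_price_slice_of_forall_Ioo c x (itemPrice c) (itemPrice c) (c + 1)
    (by linarith) fun y hy => by
      simp only [price, min_def, max_def]; split_ifs <;> linarith [hy.1, hy.2]
  rw [← intervalIntegral.integral_add_adjacent_intervals I₁ I₂, e₁, e₂]
  ring

lemma integral_price_slice_of_highCut_lt_of_lt_itemPrice (h : CutoffsOrdered c)
    (hx₁ : highCut c < x) (hx₂ : x < itemPrice c) :
    ∫ y in c..c + 1, price c (x, y) =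
      (itemPrice c + highCut c) * (x + c + 1 - (itemPrice c + highCut c)) := by
  obtain ⟨h₁, h₂, h₃, h₄⟩ := h
  obtain ⟨I₁, e₁⟩ := integral_price_slice_of_forall_Ioo c x 0 c (itemPrice c + highCut c - x)
    (by linarith) fun y hy => by
      simp only [price, min_def, max_def]; split_ifs <;> linarith [hy.1, hy.2]
  obtain ⟨I₂, e₂⟩ := integral_price_slice_of_forall_Ioo c x (itemPrice c + highCut c)
    (itemPrice c + highCut c - x) (c + 1) (by linarith) fun y hy => by
      simp only [price, min_def, max_def]; split_ifs <;> linarith [hy.1, hy.2]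
  rw [← intervalIntegral.integral_add_adjacent_intervals I₁ I₂, e₁, e₂]
  ring

lemma integral_price_slice_of_itemPrice_lt (h : CutoffsOrdered c) (hx₁ : itemPrice c < x)
    (hx₂ : x < itemPrice c + lowCut c - c) :
    ∫ y in c..c + 1, price c (x, y) = (itemPrice c + lowCut c) * (x - itemPrice c) +
      itemPrice c * (highCut c - lowCut c) + (itemPrice c + highCut c) * (c + 1 - highCut c) := by
  obtain ⟨h₁, h₂, h₃, h₄⟩ := h
  obtain ⟨I₁, e₁⟩ := integral_price_slice_of_forall_Ioo c x 0 c (itemPrice c + lowCut c - x)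
    (by linarith) fun y hy => by
      simp only [price, min_def, max_def]; split_ifs <;> linarith [hy.1, hy.2]
  obtain ⟨I₂, e₂⟩ := integral_price_slice_of_forall_Ioo c x (itemPrice c + lowCut c)
    (itemPrice c + lowCut c - x) (lowCut c) (by linarith) fun y hy => by
      simp only [price, min_def, max_def]; split_ifs <;> linarith [hy.1, hy.2]
  obtain ⟨I₃, e₃⟩ := integral_price_slice_of_forall_Ioo c x (itemPrice c) (lowCut c) (highCut c)
    h₂ fun y hy => by
      simp only [price, min_def, max_def]; split_ifs <;> linarith [hy.1, hy.2]
  obtain ⟨I₄, e₄⟩ := integral_price_slice_of_forall_Ioo c x (itemPrice c + highCut c) (highCut c)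
    (c + 1) (by linarith) fun y hy => by
      simp only [price, min_def, max_def]; split_ifs <;> linarith [hy.1, hy.2]
  rw [← intervalIntegral.integral_add_adjacent_intervals ((I₁.trans I₂).trans I₃) I₄,
    ← intervalIntegral.integral_add_adjacent_intervals (I₁.trans I₂) I₃,
    ← intervalIntegral.integral_add_adjacent_intervals I₁ I₂, e₁, e₂, e₃, e₄]
  ring

lemma integral_price_slice_of_lt_add_one (h : CutoffsOrdered c)
    (hx₁ : itemPrice c + lowCut c - c < x) (hx₂ : x < c + 1) :
    ∫ y in c..c + 1, price c (x, y) = (itemPrice c + lowCut c) * (lowCut c - c) +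
      itemPrice c * (highCut c - lowCut c) + (itemPrice c + highCut c) * (c + 1 - highCut c) := by
  obtain ⟨h₁, h₂, h₃, h₄⟩ := h
  obtain ⟨I₁, e₁⟩ := integral_price_slice_of_forall_Ioo c x (itemPrice c + lowCut c) c (lowCut c)
    h₁ fun y hy => by
      simp only [price, min_def, max_def]; split_ifs <;> linarith [hy.1, hy.2]
  obtain ⟨I₂, e₂⟩ := integral_price_slice_of_forall_Ioo c x (itemPrice c) (lowCut c) (highCut c)
    h₂ fun y hy => by
      simp only [price, min_def, max_def]; split_ifs <;> linarith [hy.1, hy.2]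
  obtain ⟨I₃, e₃⟩ := integral_price_slice_of_forall_Ioo c x (itemPrice c + highCut c) (highCut c)
    (c + 1) (by linarith) fun y hy => by
      simp only [price, min_def, max_def]; split_ifs <;> linarith [hy.1, hy.2]
  rw [← intervalIntegral.integral_add_adjacent_intervals (I₁.trans I₂) I₃,
    ← intervalIntegral.integral_add_adjacent_intervals I₁ I₂, e₁, e₂, e₃]

lemma integral_integral_price_eq_opt (hc0 : 0 ≤ c) (h : CutoffsOrdered c) :
    ∫ x in c..c + 1, ∫ y in c..c + 1, price c (x, y) = Opt c := by
  have ⟨h₁, h₂, h₃, h₄⟩ := h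
  set S : ℝ → ℝ := fun x => ∫ y in c..c + 1, price c (x, y)
  obtain ⟨I₁, e₁⟩ := integral_eq_of_eqOn_Ioo_affine (f := S) (a := c) (b := lowCut c)
    (k₀ := (itemPrice c + lowCut c) * (c + 1 - (itemPrice c + lowCut c)))
    (k₁ := itemPrice c + lowCut c) h₁ fun x hx =>
      (integral_price_slice_of_lt_lowCut h hx.1 hx.2).trans (by ring)
  obtain ⟨I₂, e₂⟩ := integral_eq_of_eqOn_Ioo_const (f := S) (a := lowCut c) (b := highCut c)
    (k := itemPrice c * (c + 1 - itemPrice c)) h₂ fun x hx =>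
      integral_price_slice_of_lowCut_lt_of_lt_highCut h hx.1 hx.2
  obtain ⟨I₃, e₃⟩ := integral_eq_of_eqOn_Ioo_affine (f := S) (a := highCut c) (b := itemPrice c)
    (k₀ := (itemPrice c + highCut c) * (c + 1 - (itemPrice c + highCut c)))
    (k₁ := itemPrice c + highCut c) h₃ fun x hx =>
      (integral_price_slice_of_highCut_lt_of_lt_itemPrice h hx.1 hx.2).trans (by ring)
  obtain ⟨I₄, e₄⟩ := integral_eq_of_eqOn_Ioo_affine (f := S) (a := itemPrice c)
    (b := itemPrice c + lowCut c - c)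
    (k₀ := -(itemPrice c + lowCut c) * itemPrice c + itemPrice c * (highCut c - lowCut c) +
      (itemPrice c + highCut c) * (c + 1 - highCut c))
    (k₁ := itemPrice c + lowCut c) (by linarith) fun x hx =>
      (integral_price_slice_of_itemPrice_lt h hx.1 hx.2).trans (by ring)
  obtain ⟨I₅, e₅⟩ := integral_eq_of_eqOn_Ioo_const (f := S) (a := itemPrice c + lowCut c - c)
    (b := c + 1) (k := (itemPrice c + lowCut c) * (lowCut c - c) +
      itemPrice c * (highCut c - lowCut c) + (itemPrice c + highCut c) * (c + 1 - highCut c))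
    (by linarith) fun x hx => integral_price_slice_of_lt_add_one h hx.1 hx.2
  rw [← intervalIntegral.integral_add_adjacent_intervals (((I₁.trans I₂).trans I₃).trans I₄) I₅,
    ← intervalIntegral.integral_add_adjacent_intervals ((I₁.trans I₂).trans I₃) I₄,
    ← intervalIntegral.integral_add_adjacent_intervals (I₁.trans I₂) I₃,
    ← intervalIntegral.integral_add_adjacent_intervals I₁ I₂, e₁, e₂, e₃, e₄, e₅]
  have hd : √(c * (3 * c + 2)) ^ 2 = c * (3 * c + 2) := sq_sqrt (by positivity)
  have h2 : √2 ^ 2 = 2 := sq_sqrt zero_le_two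
  simp only [Opt, itemPrice, lowCut, highCut]
  linear_combination (-√(c * (3 * c + 2)) / 27) * hd - (√2 * (c + 1) ^ 3 / 54) * h2

end SliceIntegrals

/-- For every `0 ≤ c ≤ c̄` there is a Lipschitz `u : ℝ² → ℝ`,
nonnegative on `[c,c+1]²`, with partial derivatives in `[0,1]` a.e. on `[c,c+1]²`,
achieving `Rev_c(u) = Opt(c)`. -/
theorem relaxed_optimal_attained (c : ℝ) (hc0 : 0 ≤ c) (hc1 : c ≤ cbar) :
    ∃ u : ℝ × ℝ → ℝ, (∃ K : NNReal, LipschitzWith K u) ∧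
      (∀ x ∈ box c, 0 ≤ u x) ∧
      (∀ᵐ x ∂(volume.restrict (box c)),
        pd1 u x ∈ Icc (0 : ℝ) 1 ∧ pd2 u x ∈ Icc (0 : ℝ) 1) ∧
      Rev c u = Opt c := by
  have h := cutoffsOrdered_of_le_cbar hc0 hc1
  refine ⟨utility c, exists_lipschitzWith_utility c, fun x _ => utility_nonneg c x, ?_, ?_⟩
  · exact ae_restrict_of_ae ((ae_integrand_utility_eq_price h.lowCut_le_highCut).mono
      fun p hp => ⟨hp.1, hp.2.1⟩)
  · rw [rev_utility_eq_integral_price h.lowCut_le_highCut, integral_integral_price_eq_opt hc0 h]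
end

section
/- The function u*(x₁,x₂) = max{0, x₁ − 2/3, x₂ − 2/3, x₁ + x₂ − (4−√2)/3} satisfies Rev_0(u*) = (2/27)(6 + √2), which equals Opt(0). -/
/-!
`u*` is the buyer's utility for the menu selling each item at price `p = 2/3` and the bundle
at price `P = (4 - √2)/3`. Where one menu option is strictly preferred, `u*` is locally the
affine function `q ⬝ x - t` of that option, so `x ⬝ ∇u - u` is its price `t`. Ties occur only
on finitely many lines, a null set, hence `Rev₀(u*)` is the sum of price times area of the
region buying that option: two rectangles of area `(1 - p)(P - p)` at price `p`, and at price
`P` a square of side `1 - (P - p)` less a right triangle with legs `2p - P`.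
-/

open MeasureTheory Real Set

open Filter Topology

section NullLines

variable {α G : Type*} [MeasurableSpace α] [MeasurableSpace G] {μ : Measure α} {ν : Measure G}

theorem ae_fst_ne_s2 [NullSingletonClass μ] (a : α) : ∀ᵐ x ∂μ.prod ν, x.1 ≠ a :=
  Measure.quasiMeasurePreserving_fst.ae (μ.ae_ne a)

theorem ae_snd_ne_s2 [NullSingletonClass ν] [SFinite ν] (a : G) :
    ∀ᵐ x ∂μ.prod ν, x.2 ≠ a :=
  Measure.quasiMeasurePreserving_snd.ae (ν.ae_ne a)

theorem ae_fst_add_snd_ne [AddGroup G] [MeasurableAdd₂ G] (μ ν : Measure G) [SFinite μ]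
    [SFinite ν] [NullSingletonClass ν] [ν.IsAddLeftInvariant] (a : G) :
    ∀ᵐ x ∂μ.prod ν, x.1 + x.2 ≠ a :=
  (measurePreserving_prod_add μ ν).quasiMeasurePreserving.ae (ae_snd_ne_s2 a)

end NullLines

theorem volume_real_Ioi_inter_Icc {a l r : ℝ} (hl : l ≤ a) (hr : a ≤ r) :
    volume.real (Ioi a ∩ Icc l r) = r - a := by
  rw [show Ioi a ∩ Icc l r = Ioc a r by
      ext x
      simp only [mem_inter_iff, mem_Ioi, mem_Icc, mem_Ioc]
      exact ⟨fun ⟨h, _, h'⟩ => ⟨h, h'⟩, fun ⟨h, h'⟩ => ⟨h, by linarith, h'⟩⟩,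
    Real.volume_real_Ioc_of_le hr]

theorem volume_real_Iio_inter_Icc {a l r : ℝ} (hl : l ≤ a) (hr : a ≤ r) :
    volume.real (Iio a ∩ Icc l r) = a - l := by
  rw [show Iio a ∩ Icc l r = Ico l a by
      ext x
      simp only [mem_inter_iff, mem_Iio, mem_Icc, mem_Ico]
      exact ⟨fun ⟨h, h', _⟩ => ⟨h', h⟩, fun ⟨h, h'⟩ => ⟨h', h, by linarith⟩⟩,
    Real.volume_real_Ico_of_le hl]

theorem volume_real_triangle {b c : ℝ} (h : 2 * b ≤ c) :
    volume.real {x : ℝ × ℝ | b < x.1 ∧ b < x.2 ∧ x.1 + x.2 ≤ c} = (c - 2 * b) ^ 2 / 2 := by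
  have hline : volume {x : ℝ × ℝ | x.1 + x.2 = c} = 0 := by
    rw [Measure.volume_eq_prod]
    simpa using ae_iff.1 (ae_fst_add_snd_ne volume volume c)
  have hT : {x : ℝ × ℝ | b < x.1 ∧ b < x.2 ∧ x.1 + x.2 ≤ c} \ {x | x.1 + x.2 = c}
      = regionBetween (fun _ => b) (fun s => c - s) (Ioc b (c - b)) := by
    ext x
    simp only [Set.mem_sdiff, mem_ofPred_eq, regionBetween, mem_Ioo, mem_Ioc]
    constructor
    · rintro ⟨⟨h₁, h₂, h₃⟩, h₄⟩
      have := lt_of_le_of_ne h₃ h₄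
      exact ⟨⟨h₁, by linarith⟩, h₂, by linarith⟩
    · rintro ⟨⟨h₁, -⟩, h₂, h₃⟩
      exact ⟨⟨h₁, h₂, by linarith⟩, (by linarith : x.1 + x.2 < c).ne⟩
  have hI : ∫ s in b..c - b, ((fun s => c - s) - fun _ => b : ℝ → ℝ) s = (c - 2 * b) ^ 2 / 2 := by
    simp only [Pi.sub_apply, sub_right_comm c _ b,
      intervalIntegral.integral_comp_sub_left (fun s => s), integral_id]
    ring
  rw [measureReal_def, ← measure_sdiff_null hline, hT, Measure.volume_eq_prod,
    volume_regionBetween_eq_integral continuous_const.integrableOn_Ioc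
      (by fun_prop : Continuous fun s : ℝ => c - s).integrableOn_Ioc measurableSet_Ioc
      (fun s hs => by linarith [hs.2]),
    ← intervalIntegral.integral_of_le (by linarith), hI, ENNReal.toReal_ofReal (by positivity)]

theorem box_zero : box 0 = Icc 0 1 ×ˢ Icc 0 1 := by
  simp [box]

noncomputable def revenueDensity (u : ℝ × ℝ → ℝ) (x : ℝ × ℝ) : ℝ :=
  x.1 * pd1 u x + x.2 * pd2 u x - u x

theorem revenueDensity_eq_of_eventuallyEq {u : ℝ × ℝ → ℝ} {x : ℝ × ℝ} {q₁ q₂ t : ℝ}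
    (hu : u =ᶠ[𝓝 x] fun y => q₁ * y.1 + q₂ * y.2 - t) : revenueDensity u x = t := by
  have h₁ : pd1 u x = q₁ := by
    have hline : (fun s => u (s, x.2)) =ᶠ[𝓝 x.1] fun s => q₁ * s + q₂ * x.2 - t :=
      ((Continuous.prodMk_left x.2).tendsto x.1).eventually hu
    have := (((hasDerivAt_id x.1).const_mul q₁).add_const (q₂ * x.2)).sub_const t
    exact (this.congr_of_eventuallyEq hline).deriv.trans (mul_one q₁)
  have h₂ : pd2 u x = q₂ := by
    have hline : (fun s => u (x.1, s)) =ᶠ[𝓝 x.2] fun s => q₁ * x.1 + q₂ * s - t :=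
      ((Continuous.prodMk_right x.1).tendsto x.2).eventually hu
    have := (((hasDerivAt_id x.2).const_mul q₂).const_add (q₁ * x.1)).sub_const t
    exact (this.congr_of_eventuallyEq hline).deriv.trans (mul_one q₂)
  rw [revenueDensity, h₁, h₂, hu.eq_of_nhds]
  ring

namespace BundlePricing

noncomputable def bundleUtility (p P : ℝ) (x : ℝ × ℝ) : ℝ :=
  max (max 0 (x.1 - p)) (max (x.2 - p) (x.1 + x.2 - P))

def bundleRegion (p P : ℝ) : Set (ℝ × ℝ) := {x | P - p < x.1 ∧ P - p < x.2 ∧ P < x.1 + x.2}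

/-- The price paid by a buyer of type `x` (its values on the null tie lines are irrelevant). -/
noncomputable def menuPrice (p P : ℝ) : ℝ × ℝ → ℝ :=
  (bundleRegion p P).indicator (fun _ => P) + (Ioi p ×ˢ Iio (P - p)).indicator (fun _ => p)
    + (Iio (P - p) ×ˢ Ioi p).indicator (fun _ => p)

variable {p P : ℝ} {x : ℝ × ℝ}

theorem isOpen_bundleRegion : IsOpen (bundleRegion p P) :=
  (isOpen_lt continuous_const continuous_fst).inter <|
    (isOpen_lt continuous_const continuous_snd).inter <|
      isOpen_lt continuous_const (continuous_fst.add continuous_snd)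

theorem revenueDensity_of_mem_bundleRegion (hx : x ∈ bundleRegion p P) :
    revenueDensity (bundleUtility p P) x = P :=
  revenueDensity_eq_of_eventuallyEq (q₁ := 1) (q₂ := 1) <|
    eventually_of_mem (isOpen_bundleRegion.mem_nhds hx) fun y ⟨h₁, h₂, h₃⟩ => by
      simp only [bundleUtility, max_def]; split_ifs <;> linarith

theorem revenueDensity_of_mem_item₁ (hP : P ≤ 2 * p) (hx : x ∈ Ioi p ×ˢ Iio (P - p)) :
    revenueDensity (bundleUtility p P) x = p :=
  revenueDensity_eq_of_eventuallyEq (q₁ := 1) (q₂ := 0) <|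
    eventually_of_mem ((isOpen_Ioi.prod isOpen_Iio).mem_nhds hx) fun y ⟨h₁, h₂⟩ => by
      simp only [mem_Ioi, mem_Iio] at h₁ h₂
      simp only [bundleUtility, max_def]; split_ifs <;> linarith

theorem revenueDensity_of_mem_item₂ (hP : P ≤ 2 * p) (hx : x ∈ Iio (P - p) ×ˢ Ioi p) :
    revenueDensity (bundleUtility p P) x = p :=
  revenueDensity_eq_of_eventuallyEq (q₁ := 0) (q₂ := 1) <|
    eventually_of_mem ((isOpen_Iio.prod isOpen_Ioi).mem_nhds hx) fun y ⟨h₁, h₂⟩ => by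
      simp only [mem_Ioi, mem_Iio] at h₁ h₂
      simp only [bundleUtility, max_def]; split_ifs <;> linarith

theorem revenueDensity_of_noPurchase (hx : x.1 < p ∧ x.2 < p ∧ x.1 + x.2 < P) :
    revenueDensity (bundleUtility p P) x = 0 :=
  revenueDensity_eq_of_eventuallyEq (q₁ := 0) (q₂ := 0) <|
    eventually_of_mem (((isOpen_lt continuous_fst continuous_const).inter <|
      (isOpen_lt continuous_snd continuous_const).inter <|
        isOpen_lt (continuous_fst.add continuous_snd) continuous_const).mem_nhds hx)
      fun y (hy : y.1 < p ∧ y.2 < p ∧ y.1 + y.2 < P) => by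
        obtain ⟨h₁, h₂, h₃⟩ := hy
        simp only [bundleUtility, max_def]; split_ifs <;> linarith

theorem revenueDensity_eq_menuPrice (hP : P ≤ 2 * p) (h₁ : x.1 ≠ p) (h₂ : x.2 ≠ p)
    (h₃ : x.1 ≠ P - p) (h₄ : x.2 ≠ P - p) (h₅ : x.1 + x.2 ≠ P) :
    revenueDensity (bundleUtility p P) x = menuPrice p P x := by
  by_cases hB : x ∈ bundleRegion p P
  · rw [revenueDensity_of_mem_bundleRegion hB]
    simp [menuPrice, hB, hB.1.not_gt, hB.2.1.not_gt]
  by_cases hI₁ : x ∈ Ioi p ×ˢ Iio (P - p)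
  · have : ¬x.1 < P - p := by linarith [mem_Ioi.1 hI₁.1]
    rw [revenueDensity_of_mem_item₁ hP hI₁]
    simp [menuPrice, hB, hI₁, this]
  by_cases hI₂ : x ∈ Iio (P - p) ×ˢ Ioi p
  · rw [revenueDensity_of_mem_item₂ hP hI₂]
    simp [menuPrice, hB, hI₁, hI₂]
  rw [show menuPrice p P x = 0 by simp [menuPrice, hB, hI₁, hI₂]]
  simp only [bundleRegion, mem_prod, mem_Ioi, mem_Iio, mem_ofPred_eq, not_and, not_lt]
    at hB hI₁ hI₂
  have hx₁ : x.1 < p := by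
    by_contra! h
    have hp := lt_of_le_of_ne h h₁.symm
    have hb := lt_of_le_of_ne (hI₁ hp) h₄.symm
    linarith [hB (by linarith) hb]
  have hx₂ : x.2 < p := by
    by_contra! h
    have hp := lt_of_le_of_ne h h₂.symm
    have hb := lt_of_le_of_ne (not_lt.1 fun h' => (hI₂ h').not_gt hp) h₃.symm
    linarith [hB hb (by linarith)]
  have hx₃ : x.1 + x.2 < P := by
    by_contra! h
    have hP' := lt_of_le_of_ne h h₅.symm
    linarith [hB (by linarith) (by linarith)]
  exact revenueDensity_of_noPurchase ⟨hx₁, hx₂, hx₃⟩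

theorem revenueDensity_ae_eq_menuPrice (hP : P ≤ 2 * p) :
    revenueDensity (bundleUtility p P) =ᵐ[volume] menuPrice p P := by
  filter_upwards [ae_fst_ne_s2 p, ae_snd_ne_s2 p, ae_fst_ne_s2 (P - p), ae_snd_ne_s2 (P - p),
    ae_fst_add_snd_ne volume volume P] with x h₁ h₂ h₃ h₄ h₅
  exact revenueDensity_eq_menuPrice hP h₁ h₂ h₃ h₄ h₅

theorem setIntegral_menuPrice (p P : ℝ) {s : Set (ℝ × ℝ)} (hs : volume s ≠ ⊤) :
    ∫ x in s, menuPrice p P x = P * volume.real (bundleRegion p P ∩ s)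
      + p * volume.real (Ioi p ×ˢ Iio (P - p) ∩ s)
      + p * volume.real (Iio (P - p) ×ˢ Ioi p ∩ s) := by
  have : IsFiniteMeasure (volume.restrict s) := isFiniteMeasure_restrict.2 hs
  have hB := (isOpen_bundleRegion (p := p) (P := P)).measurableSet
  have hI₁ : MeasurableSet (Ioi p ×ˢ Iio (P - p)) := measurableSet_Ioi.prod measurableSet_Iio
  have hI₂ : MeasurableSet (Iio (P - p) ×ˢ Ioi p) := measurableSet_Iio.prod measurableSet_Ioi
  have hiB := (integrable_const (μ := volume.restrict s) P).indicator hB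
  have hiI₁ := (integrable_const (μ := volume.restrict s) p).indicator hI₁
  have hiI₂ := (integrable_const (μ := volume.restrict s) p).indicator hI₂
  simp only [menuPrice]
  rw [integral_add' (hiB.add hiI₁) hiI₂, integral_add' hiB hiI₁, integral_indicator_const _ hB,
    integral_indicator_const _ hI₁, integral_indicator_const _ hI₂,
    measureReal_restrict_apply hB, measureReal_restrict_apply hI₁, measureReal_restrict_apply hI₂]
  simp only [smul_eq_mul]
  ring

theorem volume_real_item₁_inter_box_zero (h₀ : p ≤ P) (hP : P ≤ 2 * p) (h₁ : p ≤ 1) :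
    volume.real (Ioi p ×ˢ Iio (P - p) ∩ box 0) = (1 - p) * (P - p) := by
  rw [box_zero, prod_inter_prod, Measure.volume_eq_prod, measureReal_prod_prod,
    volume_real_Ioi_inter_Icc (by linarith) h₁,
    volume_real_Iio_inter_Icc (by linarith) (by linarith), sub_zero]

theorem volume_real_item₂_inter_box_zero (h₀ : p ≤ P) (hP : P ≤ 2 * p) (h₁ : p ≤ 1) :
    volume.real (Iio (P - p) ×ˢ Ioi p ∩ box 0) = (1 - p) * (P - p) := by
  rw [box_zero, prod_inter_prod, Measure.volume_eq_prod, measureReal_prod_prod,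
    volume_real_Ioi_inter_Icc (by linarith) h₁,
    volume_real_Iio_inter_Icc (by linarith) (by linarith), sub_zero, mul_comm]

theorem volume_real_bundleRegion_inter_box_zero (h₀ : p ≤ P) (hP : P ≤ 2 * p) (h₁ : p ≤ 1) :
    volume.real (bundleRegion p P ∩ box 0) = (1 - (P - p)) ^ 2 - (2 * p - P) ^ 2 / 2 := by
  set T := {x : ℝ × ℝ | P - p < x.1 ∧ P - p < x.2 ∧ x.1 + x.2 ≤ P}
  have hsq : bundleRegion p P ∩ box 0 = (Ioc (P - p) 1 ×ˢ Ioc (P - p) 1) \ T := by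
    ext x
    simp only [bundleRegion, box_zero, T, mem_inter_iff, Set.mem_sdiff, mem_prod, mem_Icc,
      mem_Ioc, mem_ofPred_eq, not_and, not_le]
    exact ⟨fun ⟨⟨h₁, h₂, h₃⟩, ⟨_, h₄⟩, _, h₅⟩ => ⟨⟨⟨h₁, h₄⟩, h₂, h₅⟩, fun _ _ => h₃⟩,
      fun ⟨⟨⟨h₁, h₄⟩, h₂, h₅⟩, h₃⟩ => ⟨⟨h₁, h₂, h₃ h₁ h₂⟩, ⟨by linarith, h₄⟩, by linarith, h₅⟩⟩
  have hT : T ⊆ Ioc (P - p) 1 ×ˢ Ioc (P - p) 1 := fun x ⟨h₁, h₂, h₃⟩ =>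
    ⟨⟨h₁, by linarith⟩, h₂, by linarith⟩
  have hTm : MeasurableSet T := by unfold T; measurability
  rw [hsq, measureReal_sdiff hT hTm
      ((Metric.isBounded_Ioc _ _).prod (Metric.isBounded_Ioc _ _)).measure_lt_top.ne,
    volume_real_triangle (by linarith), Measure.volume_eq_prod, measureReal_prod_prod,
    Real.volume_real_Ioc_of_le (by linarith)]
  ring

theorem rev_zero_bundleUtility (h₀ : p ≤ P) (hP : P ≤ 2 * p) (h₁ : p ≤ 1) :
    Rev 0 (bundleUtility p P)
      = P * ((1 - (P - p)) ^ 2 - (2 * p - P) ^ 2 / 2) + 2 * p * ((1 - p) * (P - p)) := by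
  change ∫ x in box 0, revenueDensity (bundleUtility p P) x = _
  rw [integral_congr_ae (ae_restrict_of_ae (revenueDensity_ae_eq_menuPrice hP)),
    setIntegral_menuPrice p P (box_zero ▸ (isCompact_Icc.prod isCompact_Icc).measure_ne_top),
    volume_real_bundleRegion_inter_box_zero h₀ hP h₁,
    volume_real_item₁_inter_box_zero h₀ hP h₁, volume_real_item₂_inter_box_zero h₀ hP h₁]
  ring

end BundlePricing

/-- The utility `u*(x₁,x₂) = max{0, x₁ − 2/3, x₂ − 2/3, x₁ + x₂ − (4−√2)/3}`
satisfies `Rev_0(u*) = (2/27)(6 + √2) = Opt(0)`. -/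
theorem revenue_of_pavlov_mechanism_at_zero :
    Rev 0 (fun x : ℝ × ℝ =>
        max (max 0 (x.1 - 2 / 3)) (max (x.2 - 2 / 3) (x.1 + x.2 - (4 - Real.sqrt 2) / 3)))
      = 2 / 27 * (6 + Real.sqrt 2) ∧
    (2 : ℝ) / 27 * (6 + Real.sqrt 2) = Opt 0 := by
  have hsq : √2 ^ 2 = 2 := sq_sqrt zero_le_two
  have hlo : 1 < √2 := by nlinarith [sqrt_nonneg 2]
  have hhi : √2 < 3 / 2 := by nlinarith [sqrt_nonneg 2]
  refine ⟨?_, by norm_num [Opt, add_comm]⟩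
  change Rev 0 (BundlePricing.bundleUtility (2 / 3) ((4 - √2) / 3)) = _
  rw [BundlePricing.rev_zero_bundleUtility (by linarith) (by linarith) (by norm_num)]
  linear_combination (-√2 / 54) * hsq
end

section
/- Let c ≥ 0 and let p ∈ [2c, 2c+1]. The full-bundling utility u_p(x₁,x₂) = max{0, x₁ + x₂ − p} satisfies Rev_c(u_p) = p·(1 − (p−2c)²/2). -/
open MeasureTheory Real Set

/-!
The utility `u_p = max 0 (x₁ + x₂ - p)` is piecewise linear, and on each piece Euler's identity
gives `x · ∇u_p - u_p = p` above the line `x₁ + x₂ = p` and `0` below it. The line is null, so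
the revenue is `p` times the area of the part of `[c, c+1]²` above the line; its complement is a
right isosceles triangle with legs `p - 2c`.
-/

section MaxZero

variable {f : ℝ → ℝ} {f' x : ℝ}

theorem HasDerivAt.max_zero_of_pos (hf : HasDerivAt f f' x) (hx : 0 < f x) :
    HasDerivAt (fun t => max 0 (f t)) f' x :=
  hf.congr_of_eventuallyEq <|
    (hf.continuousAt.eventually (lt_mem_nhds hx)).mono fun _ ht => max_eq_right ht.le

theorem HasDerivAt.max_zero_of_neg (hf : HasDerivAt f f' x) (hx : f x < 0) :
    HasDerivAt (fun t => max 0 (f t)) 0 x :=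
  (hasDerivAt_const x 0).congr_of_eventuallyEq <|
    (hf.continuousAt.eventually (gt_mem_nhds hx)).mono fun _ ht => max_eq_left ht.le

end MaxZero

theorem ae_fst_add_snd_ne_s5 (p : ℝ) : ∀ᵐ x : ℝ × ℝ, x.1 + x.2 ≠ p := by
  simp only [ae_iff, ne_eq, not_not]
  rw [Measure.volume_eq_prod, Measure.measure_prod_null]
  · filter_upwards with a
    have hsection : Prod.mk a ⁻¹' {x : ℝ × ℝ | x.1 + x.2 = p} = {p - a} := by
      ext b; simp [eq_sub_iff_add_eq, add_comm]
    simp [hsection]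
  · exact (isClosed_eq (by fun_prop) continuous_const).measurableSet

theorem volume_real_Icc_inter_Ioi (a b t : ℝ) :
    volume.real (Icc a b ∩ Ioi t) = max (b - max a t) 0 := by
  have hlower : Ioo (max a t) b ⊆ Icc a b ∩ Ioi t := fun y hy =>
    ⟨⟨(le_max_left a t).trans hy.1.le, hy.2.le⟩, (le_max_right a t).trans_lt hy.1⟩
  have hupper : Icc a b ∩ Ioi t ⊆ Icc (max a t) b := fun y hy =>
    ⟨max_le hy.1.1 hy.2.le, hy.1.2⟩
  have hvol : volume (Icc a b ∩ Ioi t) = ENNReal.ofReal (b - max a t) :=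
    le_antisymm (by simpa using measure_mono (μ := volume) hupper)
      (by simpa using measure_mono (μ := volume) hlower)
  rw [measureReal_def, hvol, ENNReal.toReal_ofReal']

def fullBundling (p : ℝ) (x : ℝ × ℝ) : ℝ := max 0 (x.1 + x.2 - p)

theorem euler_integrand_fullBundling {p : ℝ} {x : ℝ × ℝ} (hx : x.1 + x.2 ≠ p) :
    x.1 * pd1 (fullBundling p) x + x.2 * pd2 (fullBundling p) x - fullBundling p x
      = {y : ℝ × ℝ | p < y.1 + y.2}.indicator (fun _ => p) x := by
  have h1 : HasDerivAt (fun t => t + x.2 - p) 1 x.1 :=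
    ((hasDerivAt_id' x.1).add_const x.2).sub_const p
  have h2 : HasDerivAt (fun t => x.1 + t - p) 1 x.2 :=
    ((hasDerivAt_id' x.2).const_add x.1).sub_const p
  rcases hx.lt_or_gt with hlt | hgt
  · simp only [pd1, pd2, fullBundling]
    rw [(h1.max_zero_of_neg (by linarith)).deriv,
      (h2.max_zero_of_neg (by linarith)).deriv, max_eq_left (by linarith),
      indicator_of_notMem (show x ∉ {y : ℝ × ℝ | p < y.1 + y.2} from hlt.le.not_gt)]
    ring
  · simp only [pd1, pd2, fullBundling]
    rw [(h1.max_zero_of_pos (by linarith)).deriv,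
      (h2.max_zero_of_pos (by linarith)).deriv, max_eq_right (by linarith),
      indicator_of_mem (show x ∈ {y : ℝ × ℝ | p < y.1 + y.2} from hgt)]
    ring

theorem rev_fullBundling_eq (c p : ℝ) :
    Rev c (fullBundling p)
      = ∫ x in box c, {y : ℝ × ℝ | p < y.1 + y.2}.indicator (fun _ => p) x :=
  integral_congr_ae <| ae_restrict_of_ae <|
    (ae_fst_add_snd_ne_s5 p).mono fun _ => euler_integrand_fullBundling

theorem setIntegral_box_indicator_lt_add {c p : ℝ} (hp : p ≤ 2 * c + 1) :
    ∫ x in box c, {y : ℝ × ℝ | p < y.1 + y.2}.indicator (fun _ => p) x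
      = p * ∫ t in c..c + 1, (c + 1 - max c (p - t)) := by
  have hS : MeasurableSet {y : ℝ × ℝ | p < y.1 + y.2} :=
    measurableSet_lt measurable_const (by fun_prop)
  have hint : IntegrableOn ({y : ℝ × ℝ | p < y.1 + y.2}.indicator fun _ => p) (box c) :=
    (integrableOn_const (isCompact_Icc.prod isCompact_Icc).measure_lt_top.ne).indicator hS
  rw [box, Measure.volume_eq_prod] at hint ⊢
  rw [setIntegral_prod _ hint, intervalIntegral.integral_of_le (by linarith),
    ← integral_Icc_eq_integral_Ioc, ← integral_const_mul]
  refine setIntegral_congr_fun measurableSet_Icc fun t ht => ?_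
  have hsection : (fun y => {y : ℝ × ℝ | p < y.1 + y.2}.indicator (fun _ => p) (t, y))
      = (Ioi (p - t)).indicator fun _ => p := by
    ext y
    simp only [indicator_apply, mem_ofPred_eq, mem_Ioi, sub_lt_iff_lt_add']
  rw [hsection, integral_indicator_const _ measurableSet_Ioi,
    measureReal_restrict_apply measurableSet_Ioi, inter_comm, volume_real_Icc_inter_Ioi,
    max_eq_left (by grind), smul_eq_mul, mul_comm]

theorem integral_sub_max_sub {c p : ℝ} (hp : p ∈ Icc (2 * c) (2 * c + 1)) :
    ∫ t in c..c + 1, (c + 1 - max c (p - t)) = 1 - (p - 2 * c) ^ 2 / 2 := by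
  obtain ⟨hcp, hpc⟩ := hp
  have hcont : Continuous fun t => c + 1 - max c (p - t) := by fun_prop
  have hleft : ∫ t in c..p - c, (c + 1 - max c (p - t)) = ∫ t in c..p - c, (t + (c + 1 - p)) :=
    intervalIntegral.integral_congr fun t ht => by
      rw [uIcc_of_le (by linarith)] at ht
      simp only [max_eq_right (show c ≤ p - t by linarith [ht.2])]
      ring
  have hright : ∫ t in p - c..c + 1, (c + 1 - max c (p - t)) = ∫ _ in p - c..c + 1, (1 : ℝ) :=
    intervalIntegral.integral_congr fun t ht => by
      rw [uIcc_of_le (by linarith)] at ht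
      simp only [max_eq_left (show p - t ≤ c by linarith [ht.1])]
      ring
  rw [← intervalIntegral.integral_add_adjacent_intervals (b := p - c)
    (hcont.intervalIntegrable _ _) (hcont.intervalIntegrable _ _), hleft, hright,
    intervalIntegral.integral_add intervalIntegral.intervalIntegrable_id intervalIntegrable_const,
    integral_id, intervalIntegral.integral_const, intervalIntegral.integral_const, smul_eq_mul,
    smul_eq_mul]
  ring

theorem revenue_of_full_bundling_general (c p : ℝ)
    (hp : p ∈ Icc (2 * c) (2 * c + 1)) :
    Rev c (fun x : ℝ × ℝ => max 0 (x.1 + x.2 - p))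
      = p * (1 - (p - 2 * c) ^ 2 / 2) := by
  calc Rev c (fullBundling p)
      = ∫ x in box c, {y : ℝ × ℝ | p < y.1 + y.2}.indicator (fun _ => p) x :=
        rev_fullBundling_eq c p
    _ = p * ∫ t in c..c + 1, (c + 1 - max c (p - t)) := setIntegral_box_indicator_lt_add hp.2
    _ = p * (1 - (p - 2 * c) ^ 2 / 2) := by rw [integral_sub_max_sub hp]

/-- For `c ≥ 0` and `p ∈ [2c, 2c+1]`, the full-bundling utility
`u_p(x) = max{0, x₁ + x₂ − p}` has revenue `p·(1 − (p − 2c)²/2)`. -/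
theorem revenue_of_full_bundling (c p : ℝ) (hc : 0 ≤ c)
    (hp : p ∈ Icc (2 * c) (2 * c + 1)) :
    Rev c (fun x : ℝ × ℝ => max 0 (x.1 + x.2 - p))
      = p * (1 - (p - 2 * c) ^ 2 / 2) :=
  revenue_of_full_bundling_general c p hp
end

section
/- For every c ≥ 0, the maximum of the function s ↦ s·(1 − (s−2c)²/2) over s ∈ [2c, 2c+1] equals BRev(c), and it is attained uniquely at s = (4c + √(4c²+6))/3, which lies in [2c, 2c+1]. -/
open MeasureTheory Real Set

/-- For every `c ≥ 0`, the maximum of `s ↦ s(1 − (s − 2c)²/2)` over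
`s ∈ [2c, 2c+1]` equals `BRev(c)`, attained uniquely at `s* = (4c + √(4c²+6))/3`,
which lies in `[2c, 2c+1]`. -/
theorem bundle_price_optimization (c : ℝ) (hc : 0 ≤ c) :
    (4 * c + Real.sqrt (4 * c ^ 2 + 6)) / 3 ∈ Icc (2 * c) (2 * c + 1) ∧
    ((4 * c + Real.sqrt (4 * c ^ 2 + 6)) / 3)
        * (1 - ((4 * c + Real.sqrt (4 * c ^ 2 + 6)) / 3 - 2 * c) ^ 2 / 2) = BRev c ∧
    (∀ s ∈ Icc (2 * c) (2 * c + 1), s * (1 - (s - 2 * c) ^ 2 / 2) ≤ BRev c) ∧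
    (∀ s ∈ Icc (2 * c) (2 * c + 1), s * (1 - (s - 2 * c) ^ 2 / 2) = BRev c →
      s = (4 * c + Real.sqrt (4 * c ^ 2 + 6)) / 3) := by
  set r := Real.sqrt (4 * c ^ 2 + 6) with hrdef
  have hr2 : r ^ 2 = 4 * c ^ 2 + 6 := Real.sq_sqrt (by positivity)
  have hr0 : 0 < r := Real.sqrt_pos.mpr (by positivity)
  have hr2c : 2 * c ≤ r := by nlinarith [hr2, hr0.le]
  have hrub : r ≤ 2 * c + 3 := by nlinarith [hr2, hr0.le, hc]
  have key : Real.sqrt 2 * Real.sqrt ((2 * c ^ 2 + 3) ^ 3) = r * (2 * c ^ 2 + 3) := by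
    rw [← Real.sqrt_mul (by norm_num : (0:ℝ) ≤ 2)]
    have h1 : 2 * (2 * c ^ 2 + 3) ^ 3 = (r * (2 * c ^ 2 + 3)) ^ 2 := by
      rw [mul_pow, hr2]; ring
    rw [h1, Real.sqrt_sq (by positivity)]
  have hB : BRev c = 2 / 27 * (-4 * c ^ 3 + r * (2 * c ^ 2 + 3) + 18 * c) := by
    rw [BRev, key]
  have hident : ∀ s : ℝ,
      2 / 27 * (-4 * c ^ 3 + r * (2 * c ^ 2 + 3) + 18 * c) - s * (1 - (s - 2 * c) ^ 2 / 2)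
        = (3 * s - 4 * c - r) ^ 2 * (3 * s - 4 * c + 2 * r) / 54 := by
    intro s
    linear_combination ((9 * s - 12 * c - 2 * r) / 54) * hr2
  refine ⟨⟨by linarith, by linarith⟩, ?_, ?_, ?_⟩
  · rw [hB]
    have h := hident ((4 * c + r) / 3)
    nlinarith [h]
  · intro s hs
    rw [hB]
    have h := hident s
    have h3 : 0 ≤ 3 * s - 4 * c + 2 * r := by
      have := hs.1; linarith
    nlinarith [sq_nonneg (3 * s - 4 * c - r), mul_nonneg (sq_nonneg (3 * s - 4 * c - r)) h3]
  · intro s hs heq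
    rw [hB] at heq
    have h := hident s
    rw [heq] at h
    have h3 : 0 < 3 * s - 4 * c + 2 * r := by
      have := hs.1; linarith
    have h4 : (3 * s - 4 * c - r) ^ 2 = 0 := by
      rcases mul_eq_zero.mp (by linarith : (3 * s - 4 * c - r) ^ 2 * (3 * s - 4 * c + 2 * r) = 0) with h5 | h5
      · exact h5
      · linarith
    have h5 : 3 * s - 4 * c - r = 0 := by
      exact pow_eq_zero_iff (by norm_num) |>.mp h4
    linarith
end

section
/- For every real c with 0.077 < c < c̄, it holds strictly that BRev(c) < Opt(c). -/
open MeasureTheory Real Set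

/-! With `P = c(3c+2)`, `Q = 2c²+3` and `A = a + √2 b`, `a = 3(c²-2c+2)`, `b = (c+1)³`, one has
`Opt c - BRev c = 2/27 (A + √(P³) - √(2Q³))`. Squaring twice, `BRev c < Opt c` reduces to
`0 < 4A²P³ - (2Q³ - P³ - A²)² = e + √2 f` with polynomials `e, f` in `c`. As `f > 0`, it suffices
that the norm `2f² - e²` is positive, and it factors as `M² K`: the quartic `M` vanishes at `c̄`, a root
of `(c² - 2c - 6)² = 32(c+1)²`, where `Opt` and `BRev` touch, and `K` is positive on `[1/25, 1/10]`. -/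

lemma sqrt_pow_three (x : ℝ) : √(x ^ 3) = x * √x := by
  rcases le_total 0 x with hx | hx
  · rw [pow_succ, Real.sqrt_mul' _ hx, Real.sqrt_sq hx]
  · rw [Real.sqrt_eq_zero'.mpr hx, Real.sqrt_eq_zero'.mpr (by nlinarith [sq_nonneg x]), mul_zero]

lemma sqrt_lt_add_sqrt_of_sq_lt {u v A : ℝ} (hA : 0 ≤ A) (hv : 0 ≤ v)
    (h : (u - v - A ^ 2) ^ 2 < 4 * A ^ 2 * v) : √u < A + √v := by
  have hA2v : 0 < A ^ 2 * v := by nlinarith [sq_nonneg (u - v - A ^ 2)]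
  have hApos : 0 < A := lt_of_le_of_ne hA (by rintro rfl; simp at hA2v)
  have hsq : (2 * A * √v) ^ 2 = 4 * A ^ 2 * v := by rw [mul_pow, Real.sq_sqrt hv]; ring
  have hlt := (abs_lt_of_sq_lt_sq' (hsq ▸ h) (by positivity)).2
  rw [Real.sqrt_lt' (by positivity)]
  nlinarith [Real.sq_sqrt hv]

lemma add_sqrt_mul_pos_of_sq_lt {a b d : ℝ} (hb : 0 ≤ b) (h : a ^ 2 < d * b ^ 2) :
    0 < a + √d * b := by
  have hd : 0 < d := pos_of_mul_pos_left ((sq_nonneg a).trans_lt h) (sq_nonneg b)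
  have hsq : (√d * b) ^ 2 = d * b ^ 2 := by rw [mul_pow, Real.sq_sqrt hd.le]
  linarith [(abs_lt_of_sq_lt_sq' (hsq ▸ h) (by positivity)).1]

def gapRat (c : ℝ) : ℝ := 3 * (c ^ 2 - 2 * c + 2)

def gapIrr (c : ℝ) : ℝ := (c + 1) ^ 3

lemma Opt_sub_BRev (c : ℝ) :
    Opt c - BRev c = 2 / 27 * (gapRat c + √2 * gapIrr c + √((c * (3 * c + 2)) ^ 3)
      - √(2 * (2 * c ^ 2 + 3) ^ 3)) := by
  rw [sqrt_pow_three, Real.sqrt_mul zero_le_two, Opt, BRev, gapRat, gapIrr]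
  ring

lemma gapRat_pos (c : ℝ) : 0 < gapRat c := by
  unfold gapRat; nlinarith [sq_nonneg (c - 1)]

def discrRat (c : ℝ) : ℝ :=
  4 * (c * (3 * c + 2)) ^ 3 * (gapRat c ^ 2 + 2 * gapIrr c ^ 2)
    - (2 * (2 * c ^ 2 + 3) ^ 3 - (c * (3 * c + 2)) ^ 3 - gapRat c ^ 2 - 2 * gapIrr c ^ 2) ^ 2
    - 8 * gapRat c ^ 2 * gapIrr c ^ 2

def discrIrr (c : ℝ) : ℝ :=
  4 * gapRat c * gapIrr c
    * (2 * (2 * c ^ 2 + 3) ^ 3 + (c * (3 * c + 2)) ^ 3 - gapRat c ^ 2 - 2 * gapIrr c ^ 2)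

lemma gap_discr_eq (c : ℝ) :
    4 * (gapRat c + √2 * gapIrr c) ^ 2 * (c * (3 * c + 2)) ^ 3
      - (2 * (2 * c ^ 2 + 3) ^ 3 - (c * (3 * c + 2)) ^ 3 - (gapRat c + √2 * gapIrr c) ^ 2) ^ 2
      = discrRat c + √2 * discrIrr c := by
  have hs : √2 ^ 2 = 2 := Real.sq_sqrt zero_le_two
  have hsq : (gapRat c + √2 * gapIrr c) ^ 2
      = (gapRat c ^ 2 + 2 * gapIrr c ^ 2) + √2 * (2 * gapRat c * gapIrr c) := by
    linear_combination gapIrr c ^ 2 * hs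
  rw [hsq, discrRat, discrIrr]
  linear_combination (-(2 * gapRat c * gapIrr c) ^ 2) * hs

lemma discrIrr_pos {c : ℝ} (hc : 0 ≤ c) : 0 < discrIrr c := by
  have hR : 2 * (2 * c ^ 2 + 3) ^ 3 + (c * (3 * c + 2)) ^ 3 - gapRat c ^ 2 - 2 * gapIrr c ^ 2
      = 41 * c ^ 6 + 42 * c ^ 5 + 69 * c ^ 4 + 4 * c ^ 3 + 6 * c ^ 2 + 60 * c + 16 := by
    rw [gapRat, gapIrr]; ring
  rw [discrIrr, hR]
  have := gapRat_pos c
  have : 0 < gapIrr c := by unfold gapIrr; positivity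
  positivity

lemma cbar_lt : cbar < 1 / 10 := by
  have hs : √2 ^ 2 = 2 := Real.sq_sqrt (by norm_num)
  have hs0 : 1.414 < √2 := by nlinarith [Real.sqrt_nonneg 2]
  have : √(15 - 8 * √2) < 2 * √2 - 9 / 10 := by
    rw [Real.sqrt_lt' (by linarith)]
    nlinarith
  unfold cbar
  linarith

def cbarQuartic (c : ℝ) : ℝ := c ^ 4 - 4 * c ^ 3 - 40 * c ^ 2 - 40 * c + 4

lemma cbarQuartic_pos {c : ℝ} (hc : -1 ≤ c) (h : c < cbar) : 0 < cbarQuartic c := by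
  have hs : √2 ^ 2 = 2 := Real.sq_sqrt zero_le_two
  have hs0 : 1 < √2 := by nlinarith [Real.sqrt_nonneg 2]
  have hsq : (c + 2 * √2 - 1) ^ 2 < 15 - 8 * √2 := by
    rw [← Real.lt_sqrt (by linarith)]
    unfold cbar at h
    linarith
  have hlin : 4 * √2 * (c + 1) < 6 + 2 * c - c ^ 2 := by linarith
  have hsq' : (4 * √2 * (c + 1)) ^ 2 < (6 + 2 * c - c ^ 2) ^ 2 :=
    pow_lt_pow_left₀ hlin (mul_nonneg (by positivity) (by linarith)) two_ne_zero
  unfold cbarQuartic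
  nlinarith

def normCofactor (c : ℝ) : ℝ :=
  -2209 * c ^ 16 - 18800 * c ^ 15 - 50876 * c ^ 14 - 102808 * c ^ 13 - 145334 * c ^ 12
    - 149656 * c ^ 11 - 133092 * c ^ 10 - 76584 * c ^ 9 - 26929 * c ^ 8 + 13896 * c ^ 7
    + 58392 * c ^ 6 + 57536 * c ^ 5 + 44032 * c ^ 4 + 33344 * c ^ 3 + 13504 * c ^ 2
    + 1792 * c - 64

lemma normCofactor_pos {c : ℝ} (h1 : 1 / 25 ≤ c) (h2 : c ≤ 1 / 10) : 0 < normCofactor c := by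
  have hc : 0 ≤ c := by linarith
  have hpow (n : ℕ) : c ^ n ≤ (1 / 10) ^ n := pow_le_pow_left₀ hc h2 n
  unfold normCofactor
  linarith [hpow 8, hpow 9, hpow 10, hpow 11, hpow 12, hpow 13, hpow 14, hpow 15, hpow 16,
    pow_nonneg hc 2, pow_nonneg hc 3, pow_nonneg hc 4, pow_nonneg hc 5, pow_nonneg hc 6,
    pow_nonneg hc 7]

lemma two_mul_discrIrr_sq_sub_discrRat_sq (c : ℝ) :
    2 * discrIrr c ^ 2 - discrRat c ^ 2 = cbarQuartic c ^ 2 * normCofactor c := by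
  unfold discrIrr discrRat gapRat gapIrr cbarQuartic normCofactor; ring

lemma gap_discr_pos {c : ℝ} (h1 : 1 / 25 ≤ c) (h2 : c < cbar) :
    0 < discrRat c + √2 * discrIrr c := by
  have hc0 : 0 ≤ c := by linarith
  refine add_sqrt_mul_pos_of_sq_lt (discrIrr_pos hc0).le ?_
  have hnorm := mul_pos (pow_pos (cbarQuartic_pos (by linarith) h2) 2)
    (normCofactor_pos h1 (h2.le.trans cbar_lt.le))
  linarith [two_mul_discrIrr_sq_sub_discrRat_sq c]

/-- For every `c` with `0.077 < c < c̄`, strictly `BRev(c) < Opt(c)`. -/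
theorem bundling_strictly_below_relaxed_opt (c : ℝ) (h1 : 0.077 < c) (h2 : c < cbar) :
    BRev c < Opt c := by
  have hc0 : 0 ≤ c := by linarith
  have hgap : 0 ≤ gapRat c + √2 * gapIrr c :=
    add_nonneg (gapRat_pos c).le (mul_nonneg (Real.sqrt_nonneg 2) (by unfold gapIrr; positivity))
  have key := sqrt_lt_add_sqrt_of_sq_lt hgap (by positivity : 0 ≤ (c * (3 * c + 2)) ^ 3)
    (sub_pos.mp (gap_discr_eq c ▸ gap_discr_pos (by linarith) h2))
  rw [← sub_pos, Opt_sub_BRev]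
  linarith
end

section
/- At c = c̄ the two regimes meet: Opt(c̄) = BRev(c̄), and the price parameters coincide, i.e. (4−√2)(c̄+1)/3 = (4c̄ + √(4c̄²+6))/3. -/
open MeasureTheory Real Set

/-- At `c = c̄` the two regimes meet: `Opt(c̄) = BRev(c̄)` and the
price parameters coincide: `(4 − √2)(c̄ + 1)/3 = (4c̄ + √(4c̄² + 6))/3`. -/
theorem regimes_meet_at_cbar :
    Opt cbar = BRev cbar ∧
    (4 - Real.sqrt 2) * (cbar + 1) / 3
      = (4 * cbar + Real.sqrt (4 * cbar ^ 2 + 6)) / 3 := by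
  have hs2 : Real.sqrt 2 ^ 2 = 2 := Real.sq_sqrt (by norm_num)
  set s := Real.sqrt 2 with hsdef
  have hs0 : 0 ≤ s := Real.sqrt_nonneg 2
  have hslb : 1.4 ≤ s := by nlinarith
  have hsub : s ≤ 1.5 := by nlinarith
  have h15 : (0:ℝ) ≤ 15 - 8 * s := by nlinarith
  have ht2 : Real.sqrt (15 - 8 * s) ^ 2 = 15 - 8 * s := Real.sq_sqrt h15
  set t := Real.sqrt (15 - 8 * s) with htdef
  have ht0 : 0 ≤ t := Real.sqrt_nonneg _
  have htub : t ≤ 2 := by nlinarith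
  have htlb : 1.7 ≤ t := by nlinarith
  have hc : cbar = t - 2 * s + 1 := rfl
  have hcub : cbar ≤ 0.2 := by rw [hc]; linarith
  have hclb : -0.3 ≤ cbar := by rw [hc]; linarith
  have hc2 : cbar ^ 2 + (4 * s - 2) * cbar + (4 * s - 6) = 0 := by
    rw [hc]; linear_combination ht2 - 4 * hs2
  have hr1 : Real.sqrt (cbar * (3 * cbar + 2)) = 2 - s - s * cbar := by
    rw [show cbar * (3 * cbar + 2) = (2 - s - s * cbar) ^ 2 by
      linear_combination hc2 - (1 + cbar) ^ 2 * hs2]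
    exact Real.sqrt_sq (by nlinarith)
  have hr2 : Real.sqrt (4 * cbar ^ 2 + 6) = 4 - s - s * cbar := by
    rw [show 4 * cbar ^ 2 + 6 = (4 - s - s * cbar) ^ 2 by
      linear_combination 2 * hc2 - (1 + cbar) ^ 2 * hs2]
    exact Real.sqrt_sq (by nlinarith)
  have hr3 : Real.sqrt ((2 * cbar ^ 2 + 3) ^ 3)
      = (2 * cbar ^ 2 + 3) * (2 * s - 1 - cbar) := by
    rw [show (2 * cbar ^ 2 + 3) ^ 3 = ((2 * cbar ^ 2 + 3) * (2 * s - 1 - cbar)) ^ 2 by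
      linear_combination (2 * cbar ^ 2 + 3) ^ 2 * hc2 - 4 * (2 * cbar ^ 2 + 3) ^ 2 * hs2]
    exact Real.sqrt_sq (by nlinarith)
  constructor
  · unfold Opt BRev
    rw [hr1, hr3, ← hsdef]
    linear_combination (2 / 27) * hc2 - (2 / 27) * (4 * cbar ^ 2 + 6) * hs2
  · rw [hr2]; ring
end

section
/- For 0 ≤ c ≤ c̄, define q = 2(c+1)/3, p = (4−√2)(c+1)/3, b = p − q, r = (2 + c + √(c(2+3c)))/3, and d = (2c + √(c(2+3c)))/3. Then c ≤ d ≤ b ≤ q ≤ r ≤ c+1, and moreover r − q = d − c and p = q + b. Furthermore, for c ≥ 0 the inequality d ≤ b holds if and only if c ≤ c̄. -/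
set_option maxHeartbeats 1000000


open MeasureTheory Real Set

/-- For `0 ≤ c ≤ c̄`, with `q = 2(c+1)/3`, `p = (4−√2)(c+1)/3`,
`b = p − q`, `r = (2 + c + √(c(2+3c)))/3`, `d = (2c + √(c(2+3c)))/3`, the chain
`c ≤ d ≤ b ≤ q ≤ r ≤ c+1` holds, together with `r − q = d − c` and `p = q + b`;
moreover, for every `c ≥ 0`, `d ≤ b` iff `c ≤ c̄`. -/
theorem parameter_consistency :
    (∀ c : ℝ, 0 ≤ c → c ≤ cbar →
      letI q : ℝ := 2 * (c + 1) / 3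
      letI p : ℝ := (4 - Real.sqrt 2) * (c + 1) / 3
      letI b : ℝ := p - q
      letI r : ℝ := (2 + c + Real.sqrt (c * (2 + 3 * c))) / 3
      letI d : ℝ := (2 * c + Real.sqrt (c * (2 + 3 * c))) / 3
      (c ≤ d ∧ d ≤ b ∧ b ≤ q ∧ q ≤ r ∧ r ≤ c + 1) ∧
        r - q = d - c ∧ p = q + b) ∧
    (∀ c : ℝ, 0 ≤ c →
      ((2 * c + Real.sqrt (c * (2 + 3 * c))) / 3
          ≤ (4 - Real.sqrt 2) * (c + 1) / 3 - 2 * (c + 1) / 3 ↔ c ≤ cbar)) := by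
  have hs2 : Real.sqrt 2 ^ 2 = 2 := Real.sq_sqrt (by norm_num)
  have hs0 : (0:ℝ) ≤ Real.sqrt 2 := Real.sqrt_nonneg _
  have hs_lb : (1.414:ℝ) ≤ Real.sqrt 2 := by
    nlinarith [Real.sq_sqrt (show (0:ℝ) ≤ 2 by norm_num), Real.sqrt_nonneg 2]
  have hs_ub : Real.sqrt 2 ≤ 1.415 := by
    nlinarith [Real.sq_sqrt (show (0:ℝ) ≤ 2 by norm_num), Real.sqrt_nonneg 2]
  set s : ℝ := Real.sqrt 2 with hsdef
  have hwarg : (0:ℝ) ≤ 15 - 8 * s := by nlinarith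
  have hw2 : Real.sqrt (15 - 8 * s) ^ 2 = 15 - 8 * s := Real.sq_sqrt hwarg
  set w : ℝ := Real.sqrt (15 - 8 * s) with hwdef
  have hw0 : (0:ℝ) ≤ w := Real.sqrt_nonneg _
  have hw_lb : (1.9:ℝ) ≤ w := by nlinarith
  have hw_ub : w ≤ 1.93 := by nlinarith
  have hcbar : cbar = w - 2 * s + 1 := rfl
  have hcbar0 : (0:ℝ) ≤ cbar := by rw [hcbar]; nlinarith
  have hcbar_ub : cbar ≤ 0.11 := by rw [hcbar]; nlinarith
  have hfcbar : cbar ^ 2 + (4 * s - 2) * cbar - 6 + 4 * s = 0 := by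
    rw [hcbar]; nlinarith
  have key : ∀ c : ℝ, 0 ≤ c →
      ((2 * c + Real.sqrt (c * (2 + 3 * c))) / 3
          ≤ (4 - s) * (c + 1) / 3 - 2 * (c + 1) / 3 ↔ c ≤ cbar) := by
    intro c hc
    have hta : (0:ℝ) ≤ c * (2 + 3 * c) := by nlinarith
    have ht2 : Real.sqrt (c * (2 + 3 * c)) ^ 2 = c * (2 + 3 * c) := Real.sq_sqrt hta
    set t : ℝ := Real.sqrt (c * (2 + 3 * c)) with htdef
    have ht0 : (0:ℝ) ≤ t := Real.sqrt_nonneg _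
    constructor
    · intro h
      have hE : t ≤ 2 - s - s * c := by nlinarith
      have hE0 : (0:ℝ) ≤ 2 - s - s * c := le_trans ht0 hE
      have hf : c ^ 2 + (4 * s - 2) * c - 6 + 4 * s ≤ 0 := by nlinarith
      by_contra hcc
      push_neg at hcc
      have h1 : 0 < c - cbar := by linarith
      have h2 : 0 < c + cbar + 4 * s - 2 := by nlinarith
      nlinarith [mul_pos h1 h2]
    · intro h
      have hE0 : (0:ℝ) ≤ 2 - s - s * c := by nlinarith
      have hf : c ^ 2 + (4 * s - 2) * c - 6 + 4 * s ≤ 0 := by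
        nlinarith [mul_nonneg (sub_nonneg.mpr h) (show (0:ℝ) ≤ c + cbar + 4 * s - 2 by nlinarith)]
      have hE : t ≤ 2 - s - s * c := by
        have h2 : c * (2 + 3 * c) ≤ (2 - s - s * c) ^ 2 := by nlinarith
        have := Real.sqrt_le_sqrt h2
        rwa [Real.sqrt_sq hE0] at this
      nlinarith
  refine ⟨?_, key⟩
  intro c hc hcb
  have hta : (0:ℝ) ≤ c * (2 + 3 * c) := by nlinarith
  have ht2 : Real.sqrt (c * (2 + 3 * c)) ^ 2 = c * (2 + 3 * c) := Real.sq_sqrt hta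
  set t : ℝ := Real.sqrt (c * (2 + 3 * c)) with htdef
  have ht0 : (0:ℝ) ≤ t := Real.sqrt_nonneg _
  have hct : c ≤ t := by
    have h2 : c ^ 2 ≤ c * (2 + 3 * c) := by nlinarith
    have := Real.sqrt_le_sqrt h2
    rwa [Real.sqrt_sq hc] at this
  have htub : t ≤ 2 * c + 1 := by
    have h2 : c * (2 + 3 * c) ≤ (2 * c + 1) ^ 2 := by nlinarith
    have := Real.sqrt_le_sqrt h2
    rwa [Real.sqrt_sq (by linarith)] at this
  refine ⟨⟨by linarith [hct], ?_, ?_, by linarith [hct], by linarith [htub]⟩, by ring, by ring⟩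
  · exact (key c hc).mpr hcb
  · nlinarith
end

section
/- For every c with 0 ≤ c ≤ c̄, one has Opt(c) ≤ 1.009·BRev(c). (I.e., the best full-bundling revenue is a 1.009-approximation to the optimal value of the convexity-relaxed revenue-maximization program.) -/
open MeasureTheory Real Set

/-- For every `0 ≤ c ≤ c̄`, `Opt(c) ≤ 1.009 · BRev(c)`: best
full-bundling revenue is a `1.009`-approximation of the relaxed optimum. -/
theorem bundling_approximates_relaxed_opt (c : ℝ) (hc0 : 0 ≤ c) (hc1 : c ≤ cbar) :
    Opt c ≤ 1.009 * BRev c := by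
  have hs0 : (0:ℝ) ≤ Real.sqrt 2 := Real.sqrt_nonneg 2
  have hs2 : (Real.sqrt 2) ^ 2 = 2 := Real.sq_sqrt (by norm_num)
  have hsl : (1.41421356 : ℝ) ≤ Real.sqrt 2 := by nlinarith [hs2, hs0]
  have hsu : Real.sqrt 2 ≤ (1.41421357 : ℝ) := by nlinarith [hs2, hs0]
  -- bound on c
  have hin : (15 - 8 * Real.sqrt 2 : ℝ) ≤ 3.68629152 := by nlinarith
  have hin0 : (0:ℝ) ≤ 3.68629152 := by norm_num
  have hb : Real.sqrt (15 - 8 * Real.sqrt 2) ≤ 1.9199719 := by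
    have h1 : Real.sqrt (15 - 8 * Real.sqrt 2) ≤ Real.sqrt 3.68629152 :=
      Real.sqrt_le_sqrt hin
    have h2 : Real.sqrt 3.68629152 ≤ 1.9199719 := by
      rw [show (1.9199719:ℝ) = Real.sqrt (1.9199719 ^ 2) from (Real.sqrt_sq (by norm_num)).symm]
      exact Real.sqrt_le_sqrt (by norm_num)
    linarith
  have hc : c ≤ 0.0916 := by
    have : cbar ≤ 0.0916 := by unfold cbar; nlinarith [hb, hsl]
    linarith
  -- bound on q
  set q := Real.sqrt (c * (3 * c + 2)) with hqdef
  have hq0 : 0 ≤ q := Real.sqrt_nonneg _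
  have hq2 : q ^ 2 = c * (3 * c + 2) := Real.sq_sqrt (by nlinarith)
  have hq : q ≤ 0.4565 := by nlinarith [hq2, hq0]
  -- bound on s * r
  set r := Real.sqrt ((2 * c ^ 2 + 3) ^ 3) with hrdef
  have hr0 : 0 ≤ r := Real.sqrt_nonneg _
  have hr2 : r ^ 2 = (2 * c ^ 2 + 3) ^ 3 := Real.sq_sqrt (by positivity)
  have hsr : 7.3484692 * (1 + c ^ 2) ≤ Real.sqrt 2 * r := by
    nlinarith [hr2, hs2, mul_nonneg hs0 hr0, sq_nonneg (Real.sqrt 2 * r - 7.3484692 * (1 + c ^ 2)),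
      sq_nonneg c, sq_nonneg (c^2), sq_nonneg (c^3), mul_nonneg (mul_nonneg hc0 hc0) hc0]
  have hqt : q * (3 * c ^ 2 + 2 * c) ≤ 0.4565 * (3 * c ^ 2 + 2 * c) := by
    apply mul_le_mul_of_nonneg_right hq; nlinarith
  unfold Opt BRev
  rw [← hqdef, ← hrdef]
  nlinarith [hsr, hqt, hsl, hsu, hc, hc0, sq_nonneg c,
    mul_nonneg (mul_nonneg hc0 hc0) hc0, mul_nonneg hc0 hc0]
end

section
/- (Weak duality.) Let c ≥ 0. Let u : ℝ² → ℝ be Lipschitz with u ≥ 0 on [c,c+1]² and partial derivatives ≤ 1 almost everywhere on [c,c+1]². Let z₁, z₂ : ℝ² → ℝ be Lipschitz with z₁, z₂ ≥ 0 on [c,c+1]², satisfying ∂z₁/∂x₁(x) + ∂z₂/∂x₂(x) ≤ 3 for almost every x ∈ [c,c+1]², and the boundary conditions z₁(c,x₂) ≤ c, z₁(c+1,x₂) ≥ c+1 for all x₂ ∈ [c,c+1] and z₂(x₁,c) ≤ c, z₂(x₁,c+1) ≥ c+1 for all x₁ ∈ [c,c+1]. Then Rev_c(u) ≤ ∫_{[c,c+1]²}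 (z₁(x) + z₂(x)) dx. -/
open MeasureTheory Real Set

open scoped NNReal

theorem integral_mul_deriv_le_of_boundary {a b : ℝ} (hab : a ≤ b) {g w : ℝ → ℝ}
    (hg : AbsolutelyContinuousOnInterval g a b) (hw : AbsolutelyContinuousOnInterval w a b)
    (hga : 0 ≤ g a) (hgb : 0 ≤ g b) (hw0 : ∀ x ∈ Icc a b, 0 ≤ w x)
    (hg' : ∀ᵐ x ∂volume.restrict (Icc a b), deriv g x ≤ 1) (hwa : w a ≤ a) (hwb : b ≤ w b) :
    ∫ x in a..b, x * deriv g x ≤ ∫ x in a..b, (g x * deriv w x + w x - g x) := by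
  have hid : AbsolutelyContinuousOnInterval (fun x : ℝ => x) a b :=
    LipschitzWith.id.lipschitzOnWith.absolutelyContinuousOnInterval
  have hwg' : IntervalIntegrable (fun x => w x * deriv g x) volume a b :=
    hg.intervalIntegrable_deriv.continuousOn_mul hw.continuousOn
  have hgw' : IntervalIntegrable (fun x => g x * deriv w x) volume a b :=
    hw.intervalIntegrable_deriv.continuousOn_mul hg.continuousOn
  have ibp_id : ∫ x in a..b, x * deriv g x = b * g b - a * g a - ∫ x in a..b, g x := by
    simp [hid.integral_mul_deriv_eq_deriv_mul hg]
  have ibp_w : ∫ x in a..b, w x * deriv g x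
      = w b * g b - w a * g a - ∫ x in a..b, g x * deriv w x := by
    simp_rw [hw.integral_mul_deriv_eq_deriv_mul hg, mul_comm (deriv w _)]
  have hwg'_le : ∫ x in a..b, w x * deriv g x ≤ ∫ x in a..b, w x :=
    intervalIntegral.integral_mono_ae_restrict hab hwg' hw.continuousOn.intervalIntegrable <| by
      filter_upwards [hg', ae_restrict_mem measurableSet_Icc] with x hgx hx
      exact mul_le_of_le_one_right (hw0 x hx) hgx
  have hboundary : b * g b - a * g a ≤ w b * g b - w a * g a := by nlinarith
  rw [intervalIntegral.integral_sub (hgw'.add hw.continuousOn.intervalIntegrable)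
    hg.continuousOn.intervalIntegrable, intervalIntegral.integral_add hgw'
    hw.continuousOn.intervalIntegrable]
  linarith

section Fubini

variable {α β : Type*} [MeasurableSpace α] [MeasurableSpace β] {μ : Measure α} {ν : Measure β}
  [SFinite μ] [SFinite ν]

theorem ae_ae_of_ae_prod_swap {p : α × β → Prop} (h : ∀ᵐ z ∂μ.prod ν, p z) :
    ∀ᵐ y ∂ν, ∀ᵐ x ∂μ, p (x, y) := by
  rw [← Measure.prod_swap] at h
  exact Measure.ae_ae_of_ae_prod (ae_of_ae_map measurable_swap.aemeasurable h)

variable {s : Set α} {t : Set β} {f g : α × β → ℝ}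

theorem setIntegral_prod_mono (hf : IntegrableOn f (s ×ˢ t) (μ.prod ν))
    (hg : IntegrableOn g (s ×ˢ t) (μ.prod ν))
    (h : ∀ᵐ x ∂μ.restrict s, ∫ y in t, f (x, y) ∂ν ≤ ∫ y in t, g (x, y) ∂ν) :
    ∫ z in s ×ˢ t, f z ∂μ.prod ν ≤ ∫ z in s ×ˢ t, g z ∂μ.prod ν := by
  rw [IntegrableOn, ← Measure.prod_restrict] at hf hg
  rw [← Measure.prod_restrict, integral_prod f hf, integral_prod g hg]
  exact integral_mono_ae hf.integral_prod_left hg.integral_prod_left h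

theorem setIntegral_prod_mono_symm (hf : IntegrableOn f (s ×ˢ t) (μ.prod ν))
    (hg : IntegrableOn g (s ×ˢ t) (μ.prod ν))
    (h : ∀ᵐ y ∂ν.restrict t, ∫ x in s, f (x, y) ∂μ ≤ ∫ x in s, g (x, y) ∂μ) :
    ∫ z in s ×ˢ t, f z ∂μ.prod ν ≤ ∫ z in s ×ˢ t, g z ∂μ.prod ν := by
  rw [IntegrableOn, ← Measure.prod_restrict] at hf hg
  rw [← Measure.prod_restrict, integral_prod_symm f hf, integral_prod_symm g hg]
  exact integral_mono_ae hf.integral_prod_right hg.integral_prod_right h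

end Fubini

section Slices

variable {α β γ : Type*} [PseudoEMetricSpace α] [PseudoEMetricSpace β] [PseudoEMetricSpace γ]
  {v : α × β → γ} {K : ℝ≥0}

theorem LipschitzWith.comp_prodMk_right (hv : LipschitzWith K v) (y : β) :
    LipschitzWith K fun t => v (t, y) := by
  simpa [Function.comp_def] using hv.comp (LipschitzWith.prodMk_right y)

theorem LipschitzWith.comp_prodMk_left (hv : LipschitzWith K v) (x : α) :
    LipschitzWith K fun t => v (x, t) := by
  simpa [Function.comp_def] using hv.comp (LipschitzWith.prodMk_left x)

end Slices

section PartialDerivatives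

variable {v : ℝ × ℝ → ℝ} {K : ℝ≥0}

theorem measurable_pd1 (hv : Continuous v) : Measurable (pd1 v) :=
  (measurable_deriv_with_param (f := fun y t => v (t, y)) (hv.comp continuous_swap)).comp
    measurable_swap

theorem measurable_pd2 (hv : Continuous v) : Measurable (pd2 v) :=
  measurable_deriv_with_param (f := fun x t => v (x, t)) hv

theorem LipschitzWith.integrableOn_mul_pd1 (hv : LipschitzWith K v) {f : ℝ × ℝ → ℝ}
    {s : Set (ℝ × ℝ)} (hf : ContinuousOn f s) (hs : IsCompact s) :
    IntegrableOn (fun x => f x * pd1 v x) s :=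
  (hf.integrableOn_compact hs).mul_bdd (measurable_pd1 hv.continuous).aestronglyMeasurable
    (ae_of_all _ fun x => norm_deriv_le_of_lipschitz (hv.comp_prodMk_right x.2))

theorem LipschitzWith.integrableOn_mul_pd2 (hv : LipschitzWith K v) {f : ℝ × ℝ → ℝ}
    {s : Set (ℝ × ℝ)} (hf : ContinuousOn f s) (hs : IsCompact s) :
    IntegrableOn (fun x => f x * pd2 v x) s :=
  (hf.integrableOn_compact hs).mul_bdd (measurable_pd2 hv.continuous).aestronglyMeasurable
    (ae_of_all _ fun x => norm_deriv_le_of_lipschitz (hv.comp_prodMk_left x.1))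

end PartialDerivatives

section Rectangle

variable {a₁ b₁ a₂ b₂ : ℝ} {u z : ℝ × ℝ → ℝ} {Ku Kz : ℝ≥0}

theorem setIntegral_snd_mul_pd2_le (hab₂ : a₂ ≤ b₂) (hu : LipschitzWith Ku u)
    (hz : LipschitzWith Kz z) (hu0 : ∀ x ∈ Icc a₁ b₁ ×ˢ Icc a₂ b₂, 0 ≤ u x)
    (hz0 : ∀ x ∈ Icc a₁ b₁ ×ˢ Icc a₂ b₂, 0 ≤ z x)
    (hu' : ∀ᵐ x ∂volume.restrict (Icc a₁ b₁ ×ˢ Icc a₂ b₂), pd2 u x ≤ 1)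
    (hlo : ∀ x₁ ∈ Icc a₁ b₁, z (x₁, a₂) ≤ a₂) (hhi : ∀ x₁ ∈ Icc a₁ b₁, b₂ ≤ z (x₁, b₂)) :
    ∫ x in Icc a₁ b₁ ×ˢ Icc a₂ b₂, x.2 * pd2 u x
      ≤ ∫ x in Icc a₁ b₁ ×ˢ Icc a₂ b₂, (u x * pd2 z x + z x - u x) := by
  have hR : IsCompact (Icc a₁ b₁ ×ˢ Icc a₂ b₂) := isCompact_Icc.prod isCompact_Icc
  rw [Measure.volume_eq_prod, ← Measure.prod_restrict] at hu'
  refine setIntegral_prod_mono (hu.integrableOn_mul_pd2 continuous_snd.continuousOn hR)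
    (((hz.integrableOn_mul_pd2 hu.continuous.continuousOn hR).add
      (hz.continuous.continuousOn.integrableOn_compact hR)).sub
      (hu.continuous.continuousOn.integrableOn_compact hR)) ?_
  filter_upwards [Measure.ae_ae_of_ae_prod hu', ae_restrict_mem measurableSet_Icc]
    with x₁ hslice hx₁
  simp only [integral_Icc_eq_integral_Ioc, ← intervalIntegral.integral_of_le hab₂]
  exact integral_mul_deriv_le_of_boundary hab₂
    (hu.comp_prodMk_left x₁).lipschitzOnWith.absolutelyContinuousOnInterval
    (hz.comp_prodMk_left x₁).lipschitzOnWith.absolutelyContinuousOnInterval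
    (hu0 _ ⟨hx₁, left_mem_Icc.2 hab₂⟩) (hu0 _ ⟨hx₁, right_mem_Icc.2 hab₂⟩)
    (fun y hy => hz0 _ ⟨hx₁, hy⟩) hslice (hlo x₁ hx₁) (hhi x₁ hx₁)

theorem setIntegral_fst_mul_pd1_le (hab₁ : a₁ ≤ b₁) (hu : LipschitzWith Ku u)
    (hz : LipschitzWith Kz z) (hu0 : ∀ x ∈ Icc a₁ b₁ ×ˢ Icc a₂ b₂, 0 ≤ u x)
    (hz0 : ∀ x ∈ Icc a₁ b₁ ×ˢ Icc a₂ b₂, 0 ≤ z x)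
    (hu' : ∀ᵐ x ∂volume.restrict (Icc a₁ b₁ ×ˢ Icc a₂ b₂), pd1 u x ≤ 1)
    (hlo : ∀ x₂ ∈ Icc a₂ b₂, z (a₁, x₂) ≤ a₁) (hhi : ∀ x₂ ∈ Icc a₂ b₂, b₁ ≤ z (b₁, x₂)) :
    ∫ x in Icc a₁ b₁ ×ˢ Icc a₂ b₂, x.1 * pd1 u x
      ≤ ∫ x in Icc a₁ b₁ ×ˢ Icc a₂ b₂, (u x * pd1 z x + z x - u x) := by
  have hR : IsCompact (Icc a₁ b₁ ×ˢ Icc a₂ b₂) := isCompact_Icc.prod isCompact_Icc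
  rw [Measure.volume_eq_prod, ← Measure.prod_restrict] at hu'
  refine setIntegral_prod_mono_symm (hu.integrableOn_mul_pd1 continuous_fst.continuousOn hR)
    (((hz.integrableOn_mul_pd1 hu.continuous.continuousOn hR).add
      (hz.continuous.continuousOn.integrableOn_compact hR)).sub
      (hu.continuous.continuousOn.integrableOn_compact hR)) ?_
  filter_upwards [ae_ae_of_ae_prod_swap hu', ae_restrict_mem measurableSet_Icc]
    with x₂ hslice hx₂
  simp only [integral_Icc_eq_integral_Ioc, ← intervalIntegral.integral_of_le hab₁]
  exact integral_mul_deriv_le_of_boundary hab₁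
    (hu.comp_prodMk_right x₂).lipschitzOnWith.absolutelyContinuousOnInterval
    (hz.comp_prodMk_right x₂).lipschitzOnWith.absolutelyContinuousOnInterval
    (hu0 _ ⟨left_mem_Icc.2 hab₁, hx₂⟩) (hu0 _ ⟨right_mem_Icc.2 hab₁, hx₂⟩)
    (fun y hy => hz0 _ ⟨hy, hx₂⟩) hslice (hlo x₂ hx₂) (hhi x₂ hx₂)

end Rectangle

theorem Rev_eq {c : ℝ} {u : ℝ × ℝ → ℝ} {K : ℝ≥0} (hu : LipschitzWith K u) :
    Rev c u = (∫ x in box c, x.1 * pd1 u x) + (∫ x in box c, x.2 * pd2 u x)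
      - ∫ x in box c, u x := by
  have hbox : IsCompact (box c) := isCompact_Icc.prod isCompact_Icc
  have hA₁ := hu.integrableOn_mul_pd1 continuous_fst.continuousOn hbox
  have hA₂ := hu.integrableOn_mul_pd2 continuous_snd.continuousOn hbox
  have hA : IntegrableOn (fun x => x.1 * pd1 u x + x.2 * pd2 u x) (box c) := hA₁.add hA₂
  rw [Rev, integral_sub hA (hu.continuous.continuousOn.integrableOn_compact hbox),
    integral_add hA₁ hA₂]

theorem integral_sum_le_of_divergence_le {s : Set (ℝ × ℝ)} (hs : IsCompact s)
    {u z₁ z₂ : ℝ × ℝ → ℝ} {Ku K₁ K₂ : ℝ≥0} (hu : LipschitzWith Ku u)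
    (hz₁ : LipschitzWith K₁ z₁) (hz₂ : LipschitzWith K₂ z₂) (hu0 : ∀ x ∈ s, 0 ≤ u x)
    (hdiv : ∀ᵐ x ∂volume.restrict s, pd1 z₁ x + pd2 z₂ x ≤ 3) :
    (∫ x in s, (u x * pd1 z₁ x + z₁ x - u x)) + (∫ x in s, (u x * pd2 z₂ x + z₂ x - u x))
      - ∫ x in s, u x ≤ ∫ x in s, (z₁ x + z₂ x) := by
  have hint {f : ℝ × ℝ → ℝ} (hf : Continuous f) : IntegrableOn f s :=
    hf.continuousOn.integrableOn_compact hs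
  have hB₁ : IntegrableOn (fun x => u x * pd1 z₁ x + z₁ x - u x) s :=
    ((hz₁.integrableOn_mul_pd1 hu.continuous.continuousOn hs).add
      (hint hz₁.continuous)).sub (hint hu.continuous)
  have hB₂ : IntegrableOn (fun x => u x * pd2 z₂ x + z₂ x - u x) s :=
    ((hz₂.integrableOn_mul_pd2 hu.continuous.continuousOn hs).add
      (hint hz₂.continuous)).sub (hint hu.continuous)
  have hB : IntegrableOn
      (fun x => (u x * pd1 z₁ x + z₁ x - u x) + (u x * pd2 z₂ x + z₂ x - u x)) s :=
    hB₁.add hB₂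
  rw [← integral_add hB₁ hB₂, ← integral_sub hB (hint hu.continuous)]
  refine integral_mono_ae (hB.sub (hint hu.continuous))
    (hint (hz₁.continuous.add hz₂.continuous)) ?_
  filter_upwards [hdiv, ae_restrict_mem hs.measurableSet] with x hx hmem
  nlinarith [hu0 x hmem]

theorem weak_duality_general (c : ℝ)
    (u : ℝ × ℝ → ℝ) (huLip : ∃ K : NNReal, LipschitzWith K u)
    (hunn : ∀ x ∈ box c, 0 ≤ u x)
    (huder : ∀ᵐ x ∂(volume.restrict (box c)), pd1 u x ≤ 1 ∧ pd2 u x ≤ 1)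
    (z₁ z₂ : ℝ × ℝ → ℝ)
    (hz₁Lip : ∃ K : NNReal, LipschitzWith K z₁)
    (hz₂Lip : ∃ K : NNReal, LipschitzWith K z₂)
    (hz₁nn : ∀ x ∈ box c, 0 ≤ z₁ x) (hz₂nn : ∀ x ∈ box c, 0 ≤ z₂ x)
    (hzder : ∀ᵐ x ∂(volume.restrict (box c)), pd1 z₁ x + pd2 z₂ x ≤ 3)
    (hz₁lo : ∀ x₂ ∈ Icc c (c + 1), z₁ (c, x₂) ≤ c)
    (hz₁hi : ∀ x₂ ∈ Icc c (c + 1), c + 1 ≤ z₁ (c + 1, x₂))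
    (hz₂lo : ∀ x₁ ∈ Icc c (c + 1), z₂ (x₁, c) ≤ c)
    (hz₂hi : ∀ x₁ ∈ Icc c (c + 1), c + 1 ≤ z₂ (x₁, c + 1)) :
    Rev c u ≤ ∫ x in box c, (z₁ x + z₂ x) := by
  obtain ⟨Ku, hu⟩ := huLip
  obtain ⟨K₁, hz₁⟩ := hz₁Lip
  obtain ⟨K₂, hz₂⟩ := hz₂Lip
  have hc : c ≤ c + 1 := by linarith
  have h₁ : ∫ x in box c, x.1 * pd1 u x ≤ ∫ x in box c, (u x * pd1 z₁ x + z₁ x - u x) :=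
    setIntegral_fst_mul_pd1_le hc hu hz₁ hunn hz₁nn (huder.mono fun _ h => h.1) hz₁lo hz₁hi
  have h₂ : ∫ x in box c, x.2 * pd2 u x ≤ ∫ x in box c, (u x * pd2 z₂ x + z₂ x - u x) :=
    setIntegral_snd_mul_pd2_le hc hu hz₂ hunn hz₂nn (huder.mono fun _ h => h.2) hz₂lo hz₂hi
  have hdual := integral_sum_le_of_divergence_le (s := box c) (isCompact_Icc.prod isCompact_Icc)
    hu hz₁ hz₂ hunn hzder
  rw [Rev_eq hu]
  linarith

/-- weak duality: For `c ≥ 0`, any feasible primal `u` and any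
feasible dual `(z₁, z₂)` satisfy `Rev_c(u) ≤ ∫_{[c,c+1]²} (z₁ + z₂)`. -/
theorem weak_duality (c : ℝ) (hc : 0 ≤ c)
    (u : ℝ × ℝ → ℝ) (huLip : ∃ K : NNReal, LipschitzWith K u)
    (hunn : ∀ x ∈ box c, 0 ≤ u x)
    (huder : ∀ᵐ x ∂(volume.restrict (box c)), pd1 u x ≤ 1 ∧ pd2 u x ≤ 1)
    (z₁ z₂ : ℝ × ℝ → ℝ)
    (hz₁Lip : ∃ K : NNReal, LipschitzWith K z₁)
    (hz₂Lip : ∃ K : NNReal, LipschitzWith K z₂)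
    (hz₁nn : ∀ x ∈ box c, 0 ≤ z₁ x) (hz₂nn : ∀ x ∈ box c, 0 ≤ z₂ x)
    (hzder : ∀ᵐ x ∂(volume.restrict (box c)), pd1 z₁ x + pd2 z₂ x ≤ 3)
    (hz₁lo : ∀ x₂ ∈ Icc c (c + 1), z₁ (c, x₂) ≤ c)
    (hz₁hi : ∀ x₂ ∈ Icc c (c + 1), c + 1 ≤ z₁ (c + 1, x₂))
    (hz₂lo : ∀ x₁ ∈ Icc c (c + 1), z₂ (x₁, c) ≤ c)
    (hz₂hi : ∀ x₁ ∈ Icc c (c + 1), c + 1 ≤ z₂ (x₁, c + 1)) :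
    Rev c u ≤ ∫ x in box c, (z₁ x + z₂ x) :=
  weak_duality_general c u huLip hunn huder z₁ z₂ hz₁Lip hz₂Lip hz₁nn hz₂nn hzder hz₁lo hz₁hi hz₂lo
    hz₂hi
end

section
/- (Exact complementarity.) Let c ≥ 0, let u be a feasible primal solution (Lipschitz, u ≥ 0 on [c,c+1]², partial derivatives ≤ 1 a.e. on [c,c+1]²), and let (z₁,z₂) be a feasible dual solution (Lipschitz, z₁,z₂ ≥ 0 on [c,c+1]², ∂z₁/∂x₁ + ∂z₂/∂x₂ ≤ 3 a.e. on [c,c+1]², z₁(c,x₂) ≤ c, z₁(c+1,x₂) ≥ c+1, z₂(x₁,c) ≤ c, z₂(x₁,c+1) ≥ c+1). Suppose the following complementarity conditions hold: (i) for a.e. x ∈ [c,c+1]², u(x) = 0 or ∂z₁/∂x₁(x) + ∂z₂/∂x₂(x) = 3; (ii) for a.e. x₂ ∈ [c,c+1], u(c,x₂) = 0 or z₁(c,x₂) = c, and u(c+1,x₂) = 0 or z₁(c+1,x₂) = c+1, and symmetrically for z₂ on the horizontal boundary pieces; (iii) for a.e. x ∈ [c,c+1]² and each j ∈ {1,2},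 z_j(x) = 0 or ∂u/∂x_j(x) = 1. Then Rev_c(u) = ∫_{[c,c+1]²}(z₁ + z₂), and consequently Rev_c(u') ≤ Rev_c(u) for every feasible primal u' and ∫_{[c,c+1]²}(z₁ + z₂) ≤ ∫_{[c,c+1]²}(z₁' + z₂') for every feasible dual (z₁',z₂'). -/
open MeasureTheory Real Set

@[simp]
theorem pd1_fst (x : ℝ × ℝ) : pd1 Prod.fst x = 1 := by
  simp [pd1]

@[simp]
theorem pd2_snd (x : ℝ × ℝ) : pd2 Prod.snd x = 1 := by
  simp [pd2]

namespace LipschitzWith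

variable {u v w : ℝ × ℝ → ℝ} {K L : NNReal}

theorem comp_prodMk_right_s15 (hu : LipschitzWith K u) (y : ℝ) : LipschitzWith K fun t => u (t, y) := by
  simpa [Function.comp_def] using hu.comp (LipschitzWith.prodMk_right y)

theorem comp_prodMk_left_s15 (hu : LipschitzWith K u) (x : ℝ) : LipschitzWith K fun t => u (x, t) := by
  simpa [Function.comp_def] using hu.comp (LipschitzWith.prodMk_left x)

theorem abs_pd1_le (hu : LipschitzWith K u) (x : ℝ × ℝ) : |pd1 u x| ≤ K :=
  norm_deriv_le_of_lipschitz (hu.comp_prodMk_right_s15 x.2)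

theorem abs_pd2_le (hu : LipschitzWith K u) (x : ℝ × ℝ) : |pd2 u x| ≤ K :=
  norm_deriv_le_of_lipschitz (hu.comp_prodMk_left_s15 x.1)

theorem measurable_pd1 (hu : LipschitzWith K u) : Measurable (pd1 u) :=
  (measurable_deriv_with_param (f := fun s t => u (t, s))
    (hu.continuous.comp continuous_swap)).comp measurable_swap

theorem measurable_pd2 (hu : LipschitzWith K u) : Measurable (pd2 u) :=
  measurable_deriv_with_param (f := fun s t => u (s, t)) hu.continuous

theorem integrableOn_pd1 (hu : LipschitzWith K u) {s : Set (ℝ × ℝ)} (hs : IsCompact s) :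
    IntegrableOn (pd1 u) s :=
  Measure.integrableOn_of_bounded hs.measure_ne_top hu.measurable_pd1.aestronglyMeasurable
    (.of_forall (hu.abs_pd1_le ·))

theorem integrableOn_pd2 (hu : LipschitzWith K u) {s : Set (ℝ × ℝ)} (hs : IsCompact s) :
    IntegrableOn (pd2 u) s :=
  Measure.integrableOn_of_bounded hs.measure_ne_top hu.measurable_pd2.aestronglyMeasurable
    (.of_forall (hu.abs_pd2_le ·))

theorem ae_pd1_sub (hv : LipschitzWith K v) (hw : LipschitzWith L w) :
    ∀ᵐ x, pd1 (fun y => v y - w y) x = pd1 v x - pd1 w x := by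
  filter_upwards [hv.ae_differentiableAt, hw.ae_differentiableAt] with x hvx hwx
  have slice {f : ℝ × ℝ → ℝ} (hf : DifferentiableAt ℝ f x) :
      DifferentiableAt ℝ (fun t => f (t, x.2)) x.1 :=
    hf.comp (𝕜 := ℝ) x.1 (by fun_prop)
  exact deriv_sub (slice hvx) (slice hwx)

theorem ae_pd2_sub (hv : LipschitzWith K v) (hw : LipschitzWith L w) :
    ∀ᵐ x, pd2 (fun y => v y - w y) x = pd2 v x - pd2 w x := by
  filter_upwards [hv.ae_differentiableAt, hw.ae_differentiableAt] with x hvx hwx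
  have slice {f : ℝ × ℝ → ℝ} (hf : DifferentiableAt ℝ f x) :
      DifferentiableAt ℝ (fun t => f (x.1, t)) x.2 :=
    hf.comp (𝕜 := ℝ) x.2 (by fun_prop)
  exact deriv_sub (slice hvx) (slice hwx)

theorem integral_Icc_deriv_mul_eq_sub {f g : ℝ → ℝ} (hf : LipschitzWith K f)
    (hg : LipschitzWith L g) {a b : ℝ} (hab : a ≤ b) :
    ∫ t in Icc a b, (deriv f t * g t + f t * deriv g t) = f b * g b - f a * g a := by
  rw [integral_Icc_eq_integral_Ioc, ← intervalIntegral.integral_of_le hab]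
  exact hf.lipschitzOnWith.absolutelyContinuousOnInterval.integral_deriv_mul_eq_sub
    hg.lipschitzOnWith.absolutelyContinuousOnInterval

end LipschitzWith

section IntegrationByParts

variable {u w : ℝ × ℝ → ℝ} {K L : NNReal} {a₁ b₁ a₂ b₂ : ℝ}

theorem integrableOn_pd1_mul_add_mul_pd1 (hw : LipschitzWith L w) (hu : LipschitzWith K u)
    {s : Set (ℝ × ℝ)} (hs : IsCompact s) :
    IntegrableOn (fun x => pd1 w x * u x + w x * pd1 u x) s :=
  ((hw.integrableOn_pd1 hs).mul_continuousOn hu.continuous.continuousOn hs).add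
    ((hu.integrableOn_pd1 hs).continuousOn_mul hw.continuous.continuousOn hs)

theorem integrableOn_pd2_mul_add_mul_pd2 (hw : LipschitzWith L w) (hu : LipschitzWith K u)
    {s : Set (ℝ × ℝ)} (hs : IsCompact s) :
    IntegrableOn (fun x => pd2 w x * u x + w x * pd2 u x) s :=
  ((hw.integrableOn_pd2 hs).mul_continuousOn hu.continuous.continuousOn hs).add
    ((hu.integrableOn_pd2 hs).continuousOn_mul hw.continuous.continuousOn hs)

theorem setIntegral_pd1_mul_eq_sub (hw : LipschitzWith L w) (hu : LipschitzWith K u)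
    (h₁ : a₁ ≤ b₁) :
    ∫ x in Icc a₁ b₁ ×ˢ Icc a₂ b₂, (pd1 w x * u x + w x * pd1 u x)
      = ∫ y in Icc a₂ b₂, (w (b₁, y) * u (b₁, y) - w (a₁, y) * u (a₁, y)) := by
  have hint : IntegrableOn _ (Icc a₁ b₁ ×ˢ Icc a₂ b₂) :=
    integrableOn_pd1_mul_add_mul_pd1 hw hu (isCompact_Icc.prod isCompact_Icc)
  rw [IntegrableOn, Measure.volume_eq_prod, ← Measure.prod_restrict] at hint
  rw [Measure.volume_eq_prod, ← Measure.prod_restrict, integral_prod_symm _ hint]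
  exact setIntegral_congr_fun measurableSet_Icc fun y _ =>
    (hw.comp_prodMk_right_s15 y).integral_Icc_deriv_mul_eq_sub (hu.comp_prodMk_right_s15 y) h₁

theorem setIntegral_pd2_mul_eq_sub (hw : LipschitzWith L w) (hu : LipschitzWith K u)
    (h₂ : a₂ ≤ b₂) :
    ∫ x in Icc a₁ b₁ ×ˢ Icc a₂ b₂, (pd2 w x * u x + w x * pd2 u x)
      = ∫ x in Icc a₁ b₁, (w (x, b₂) * u (x, b₂) - w (x, a₂) * u (x, a₂)) := by
  have hint : IntegrableOn _ (Icc a₁ b₁ ×ˢ Icc a₂ b₂) :=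
    integrableOn_pd2_mul_add_mul_pd2 hw hu (isCompact_Icc.prod isCompact_Icc)
  rw [Measure.volume_eq_prod] at hint
  rw [Measure.volume_eq_prod, setIntegral_prod _ hint]
  exact setIntegral_congr_fun measurableSet_Icc fun x _ =>
    (hw.comp_prodMk_left_s15 x).integral_Icc_deriv_mul_eq_sub (hu.comp_prodMk_left_s15 x) h₂

end IntegrationByParts

section Duality

noncomputable def slack (u z₁ z₂ : ℝ × ℝ → ℝ) (x : ℝ × ℝ) : ℝ :=
  u x * (3 - (pd1 z₁ x + pd2 z₂ x)) + z₁ x * (1 - pd1 u x) + z₂ x * (1 - pd2 u x)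

def verticalSidesTerm (c : ℝ) (u z₁ : ℝ × ℝ → ℝ) (x₂ : ℝ) : ℝ :=
  (c + 1 - z₁ (c + 1, x₂)) * u (c + 1, x₂) - (c - z₁ (c, x₂)) * u (c, x₂)

def horizontalSidesTerm (c : ℝ) (u z₂ : ℝ × ℝ → ℝ) (x₁ : ℝ) : ℝ :=
  (c + 1 - z₂ (x₁, c + 1)) * u (x₁, c + 1) - (c - z₂ (x₁, c)) * u (x₁, c)

structure IsPrimalFeasible (c : ℝ) (u : ℝ × ℝ → ℝ) : Prop where
  lipschitz : ∃ K : NNReal, LipschitzWith K u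
  nonneg : ∀ x ∈ box c, 0 ≤ u x
  pd_le_one : ∀ᵐ x ∂(volume.restrict (box c)), pd1 u x ≤ 1 ∧ pd2 u x ≤ 1

structure IsDualFeasible (c : ℝ) (z₁ z₂ : ℝ × ℝ → ℝ) : Prop where
  lipschitz₁ : ∃ K : NNReal, LipschitzWith K z₁
  lipschitz₂ : ∃ K : NNReal, LipschitzWith K z₂
  nonneg₁ : ∀ x ∈ box c, 0 ≤ z₁ x
  nonneg₂ : ∀ x ∈ box c, 0 ≤ z₂ x
  div_le_three : ∀ᵐ x ∂(volume.restrict (box c)), pd1 z₁ x + pd2 z₂ x ≤ 3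
  left_le : ∀ x₂ ∈ Icc c (c + 1), z₁ (c, x₂) ≤ c
  le_right : ∀ x₂ ∈ Icc c (c + 1), c + 1 ≤ z₁ (c + 1, x₂)
  bottom_le : ∀ x₁ ∈ Icc c (c + 1), z₂ (x₁, c) ≤ c
  le_top : ∀ x₁ ∈ Icc c (c + 1), c + 1 ≤ z₂ (x₁, c + 1)

variable {c : ℝ} {u z₁ z₂ : ℝ × ℝ → ℝ} {K L₁ L₂ : NNReal}

theorem Rev_sub_integral_eq (hu : LipschitzWith K u) (hz₁ : LipschitzWith L₁ z₁)
    (hz₂ : LipschitzWith L₂ z₂) :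
    Rev c u - ∫ x in box c, (z₁ x + z₂ x) =
      (∫ x₂ in Icc c (c + 1), verticalSidesTerm c u z₁ x₂)
      + (∫ x₁ in Icc c (c + 1), horizontalSidesTerm c u z₂ x₁)
      - ∫ x in box c, slack u z₁ z₂ x := by
  unfold verticalSidesTerm horizontalSidesTerm
  have hbox : IsCompact (box c) := isCompact_Icc.prod isCompact_Icc
  have hc : c ≤ c + 1 := by linarith
  have hcu := hu.continuous
  have hcz₁ := hz₁.continuous
  have hcz₂ := hz₂.continuous
  have hw₁ : LipschitzWith (1 + L₁) fun x : ℝ × ℝ => x.1 - z₁ x := LipschitzWith.prod_fst.sub hz₁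
  have hw₂ : LipschitzWith (1 + L₂) fun x : ℝ × ℝ => x.2 - z₂ x := LipschitzWith.prod_snd.sub hz₂
  have hR : IntegrableOn (fun x => x.1 * pd1 u x + x.2 * pd2 u x - u x) (box c) :=
    (((hu.integrableOn_pd1 hbox).continuousOn_mul (by fun_prop) hbox).add
      ((hu.integrableOn_pd2 hbox).continuousOn_mul (by fun_prop) hbox)).sub
      (ContinuousOn.integrableOn_compact hbox (by fun_prop))
  have hZ : IntegrableOn (fun x => z₁ x + z₂ x) (box c) :=
    ContinuousOn.integrableOn_compact hbox (by fun_prop)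
  have hG : IntegrableOn (slack u z₁ z₂) (box c) := by
    unfold slack
    have hconst (a : ℝ) : IntegrableOn (fun _ => a) (box c) :=
      integrableOn_const hbox.measure_ne_top
    refine .fun_add (.fun_add ?_ ?_) ?_ <;> refine .continuousOn_mul (by fun_prop) ?_ hbox
    · exact (hconst 3).fun_sub ((hz₁.integrableOn_pd1 hbox).fun_add (hz₂.integrableOn_pd2 hbox))
    · exact (hconst 1).fun_sub (hu.integrableOn_pd1 hbox)
    · exact (hconst 1).fun_sub (hu.integrableOn_pd2 hbox)
  have hH₁ := integrableOn_pd1_mul_add_mul_pd1 hw₁ hu hbox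
  have hH₂ := integrableOn_pd2_mul_add_mul_pd2 hw₂ hu hbox
  have hIBP₁ := setIntegral_pd1_mul_eq_sub (a₂ := c) (b₂ := c + 1) hw₁ hu hc
  have hIBP₂ := setIntegral_pd2_mul_eq_sub (a₁ := c) (b₁ := c + 1) hw₂ hu hc
  simp only [← box.eq_1] at hIBP₁ hIBP₂
  rw [← hIBP₁, ← hIBP₂, Rev, ← integral_sub hR hZ, ← integral_add hH₁ hH₂,
    ← integral_sub (hH₁.fun_add hH₂) hG]
  refine integral_congr_ae ?_
  filter_upwards [ae_restrict_of_ae (LipschitzWith.prod_fst.ae_pd1_sub hz₁),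
    ae_restrict_of_ae (LipschitzWith.prod_snd.ae_pd2_sub hz₂)] with x h₁ h₂
  simp only [slack, h₁, h₂, pd1_fst, pd2_snd]
  ring

theorem Rev_le_integral_of_feasible (hu : IsPrimalFeasible c u) (hz : IsDualFeasible c z₁ z₂) :
    Rev c u ≤ ∫ x in box c, (z₁ x + z₂ x) := by
  obtain ⟨K, hK⟩ := hu.lipschitz
  obtain ⟨L₁, hL₁⟩ := hz.lipschitz₁
  obtain ⟨L₂, hL₂⟩ := hz.lipschitz₂
  have hc : c ≤ c + 1 := by linarith
  have hB₁ : ∫ x₂ in Icc c (c + 1), verticalSidesTerm c u z₁ x₂ ≤ 0 := by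
    refine setIntegral_nonpos measurableSet_Icc fun x₂ hx₂ => ?_
    refine sub_nonpos.2 (le_trans ?_ (mul_nonneg ?_ (hu.nonneg _ ⟨⟨le_rfl, hc⟩, hx₂⟩)))
    · exact mul_nonpos_of_nonpos_of_nonneg (by linarith [hz.le_right x₂ hx₂])
        (hu.nonneg _ ⟨⟨hc, le_rfl⟩, hx₂⟩)
    · linarith [hz.left_le x₂ hx₂]
  have hB₂ : ∫ x₁ in Icc c (c + 1), horizontalSidesTerm c u z₂ x₁ ≤ 0 := by
    refine setIntegral_nonpos measurableSet_Icc fun x₁ hx₁ => ?_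
    refine sub_nonpos.2 (le_trans ?_ (mul_nonneg ?_ (hu.nonneg _ ⟨hx₁, ⟨le_rfl, hc⟩⟩)))
    · exact mul_nonpos_of_nonpos_of_nonneg (by linarith [hz.le_top x₁ hx₁])
        (hu.nonneg _ ⟨hx₁, ⟨hc, le_rfl⟩⟩)
    · linarith [hz.bottom_le x₁ hx₁]
  have hG : 0 ≤ ∫ x in box c, slack u z₁ z₂ x := by
    refine integral_nonneg_of_ae ?_
    filter_upwards [hu.pd_le_one, hz.div_le_three,
      ae_restrict_mem (measurableSet_Icc.prod measurableSet_Icc)] with x ⟨h₁, h₂⟩ h₃ hx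
    exact add_nonneg (add_nonneg (mul_nonneg (hu.nonneg x hx) (sub_nonneg.2 h₃))
      (mul_nonneg (hz.nonneg₁ x hx) (sub_nonneg.2 h₁)))
      (mul_nonneg (hz.nonneg₂ x hx) (sub_nonneg.2 h₂))
  linarith [Rev_sub_integral_eq (c := c) hK hL₁ hL₂]

theorem Rev_eq_integral_of_complementary (hu : LipschitzWith K u) (hz₁ : LipschitzWith L₁ z₁)
    (hz₂ : LipschitzWith L₂ z₂)
    (hcomp₁ : ∀ᵐ x ∂(volume.restrict (box c)), u x = 0 ∨ pd1 z₁ x + pd2 z₂ x = 3)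
    (hcomp₂ : ∀ᵐ x₂ ∂(volume.restrict (Icc c (c + 1))),
      (u (c, x₂) = 0 ∨ z₁ (c, x₂) = c) ∧ (u (c + 1, x₂) = 0 ∨ z₁ (c + 1, x₂) = c + 1))
    (hcomp₂' : ∀ᵐ x₁ ∂(volume.restrict (Icc c (c + 1))),
      (u (x₁, c) = 0 ∨ z₂ (x₁, c) = c) ∧ (u (x₁, c + 1) = 0 ∨ z₂ (x₁, c + 1) = c + 1))
    (hcomp₃ : ∀ᵐ x ∂(volume.restrict (box c)),
      (z₁ x = 0 ∨ pd1 u x = 1) ∧ (z₂ x = 0 ∨ pd2 u x = 1)) :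
    Rev c u = ∫ x in box c, (z₁ x + z₂ x) := by
  have hB₁ : ∫ x₂ in Icc c (c + 1), verticalSidesTerm c u z₁ x₂ = 0 := by
    refine integral_eq_zero_of_ae ?_
    filter_upwards [hcomp₂] with x₂ ⟨h₀, h₁⟩
    rcases h₀ with h₀ | h₀ <;> rcases h₁ with h₁ | h₁ <;> simp [verticalSidesTerm, h₀, h₁]
  have hB₂ : ∫ x₁ in Icc c (c + 1), horizontalSidesTerm c u z₂ x₁ = 0 := by
    refine integral_eq_zero_of_ae ?_
    filter_upwards [hcomp₂'] with x₁ ⟨h₀, h₁⟩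
    rcases h₀ with h₀ | h₀ <;> rcases h₁ with h₁ | h₁ <;> simp [horizontalSidesTerm, h₀, h₁]
  have hG : ∫ x in box c, slack u z₁ z₂ x = 0 := by
    refine integral_eq_zero_of_ae ?_
    filter_upwards [hcomp₁, hcomp₃] with x h₀ ⟨h₁, h₂⟩
    rcases h₀ with h₀ | h₀ <;> rcases h₁ with h₁ | h₁ <;> rcases h₂ with h₂ | h₂ <;>
      simp [slack, h₀, h₁, h₂]
  linarith [Rev_sub_integral_eq (c := c) hu hz₁ hz₂]

end Duality

theorem exact_complementarity_general (c : ℝ)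
    (u : ℝ × ℝ → ℝ) (huLip : ∃ K : NNReal, LipschitzWith K u)
    (hunn : ∀ x ∈ box c, 0 ≤ u x)
    (huder : ∀ᵐ x ∂(volume.restrict (box c)), pd1 u x ≤ 1 ∧ pd2 u x ≤ 1)
    (z₁ z₂ : ℝ × ℝ → ℝ)
    (hz₁Lip : ∃ K : NNReal, LipschitzWith K z₁)
    (hz₂Lip : ∃ K : NNReal, LipschitzWith K z₂)
    (hz₁nn : ∀ x ∈ box c, 0 ≤ z₁ x) (hz₂nn : ∀ x ∈ box c, 0 ≤ z₂ x)
    (hzder : ∀ᵐ x ∂(volume.restrict (box c)), pd1 z₁ x + pd2 z₂ x ≤ 3)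
    (hz₁lo : ∀ x₂ ∈ Icc c (c + 1), z₁ (c, x₂) ≤ c)
    (hz₁hi : ∀ x₂ ∈ Icc c (c + 1), c + 1 ≤ z₁ (c + 1, x₂))
    (hz₂lo : ∀ x₁ ∈ Icc c (c + 1), z₂ (x₁, c) ≤ c)
    (hz₂hi : ∀ x₁ ∈ Icc c (c + 1), c + 1 ≤ z₂ (x₁, c + 1))
    -- (i) interior complementarity
    (hcomp₁ : ∀ᵐ x ∂(volume.restrict (box c)),
      u x = 0 ∨ pd1 z₁ x + pd2 z₂ x = 3)
    -- (ii) boundary complementarity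
    (hcomp₂ : ∀ᵐ x₂ ∂(volume.restrict (Icc c (c + 1))),
      (u (c, x₂) = 0 ∨ z₁ (c, x₂) = c) ∧
      (u (c + 1, x₂) = 0 ∨ z₁ (c + 1, x₂) = c + 1))
    (hcomp₂' : ∀ᵐ x₁ ∂(volume.restrict (Icc c (c + 1))),
      (u (x₁, c) = 0 ∨ z₂ (x₁, c) = c) ∧
      (u (x₁, c + 1) = 0 ∨ z₂ (x₁, c + 1) = c + 1))
    -- (iii) dual complementarity
    (hcomp₃ : ∀ᵐ x ∂(volume.restrict (box c)),
      (z₁ x = 0 ∨ pd1 u x = 1) ∧ (z₂ x = 0 ∨ pd2 u x = 1)) :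
    Rev c u = (∫ x in box c, (z₁ x + z₂ x)) ∧
    (∀ u' : ℝ × ℝ → ℝ, (∃ K : NNReal, LipschitzWith K u') →
      (∀ x ∈ box c, 0 ≤ u' x) →
      (∀ᵐ x ∂(volume.restrict (box c)), pd1 u' x ≤ 1 ∧ pd2 u' x ≤ 1) →
      Rev c u' ≤ Rev c u) ∧
    (∀ z₁' z₂' : ℝ × ℝ → ℝ,
      (∃ K : NNReal, LipschitzWith K z₁') → (∃ K : NNReal, LipschitzWith K z₂') →
      (∀ x ∈ box c, 0 ≤ z₁' x) → (∀ x ∈ box c, 0 ≤ z₂' x) →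
      (∀ᵐ x ∂(volume.restrict (box c)), pd1 z₁' x + pd2 z₂' x ≤ 3) →
      (∀ x₂ ∈ Icc c (c + 1), z₁' (c, x₂) ≤ c) →
      (∀ x₂ ∈ Icc c (c + 1), c + 1 ≤ z₁' (c + 1, x₂)) →
      (∀ x₁ ∈ Icc c (c + 1), z₂' (x₁, c) ≤ c) →
      (∀ x₁ ∈ Icc c (c + 1), c + 1 ≤ z₂' (x₁, c + 1)) →
      (∫ x in box c, (z₁ x + z₂ x)) ≤ ∫ x in box c, (z₁' x + z₂' x)) := by
  obtain ⟨K, hK⟩ := huLip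
  obtain ⟨L₁, hL₁⟩ := hz₁Lip
  obtain ⟨L₂, hL₂⟩ := hz₂Lip
  have heq := Rev_eq_integral_of_complementary hK hL₁ hL₂ hcomp₁ hcomp₂ hcomp₂' hcomp₃
  have hu : IsPrimalFeasible c u := ⟨⟨K, hK⟩, hunn, huder⟩
  have hz : IsDualFeasible c z₁ z₂ :=
    ⟨⟨L₁, hL₁⟩, ⟨L₂, hL₂⟩, hz₁nn, hz₂nn, hzder, hz₁lo, hz₁hi, hz₂lo, hz₂hi⟩
  exact ⟨heq, fun u' h₁ h₂ h₃ => heq ▸ Rev_le_integral_of_feasible ⟨h₁, h₂, h₃⟩ hz,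
    fun z₁' z₂' h₁ h₂ h₃ h₄ h₅ h₆ h₇ h₈ h₉ =>
      heq ▸ Rev_le_integral_of_feasible hu ⟨h₁, h₂, h₃, h₄, h₅, h₆, h₇, h₈, h₉⟩⟩

/-- exact complementarity: if a feasible primal `u` and a feasible
dual `(z₁, z₂)` satisfy the complementarity conditions (i)–(iii), then
`Rev_c(u) = ∫ (z₁ + z₂)`, `u` is primal-optimal and `(z₁, z₂)` is dual-optimal. -/
theorem exact_complementarity (c : ℝ) (hc : 0 ≤ c)
    (u : ℝ × ℝ → ℝ) (huLip : ∃ K : NNReal, LipschitzWith K u)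
    (hunn : ∀ x ∈ box c, 0 ≤ u x)
    (huder : ∀ᵐ x ∂(volume.restrict (box c)), pd1 u x ≤ 1 ∧ pd2 u x ≤ 1)
    (z₁ z₂ : ℝ × ℝ → ℝ)
    (hz₁Lip : ∃ K : NNReal, LipschitzWith K z₁)
    (hz₂Lip : ∃ K : NNReal, LipschitzWith K z₂)
    (hz₁nn : ∀ x ∈ box c, 0 ≤ z₁ x) (hz₂nn : ∀ x ∈ box c, 0 ≤ z₂ x)
    (hzder : ∀ᵐ x ∂(volume.restrict (box c)), pd1 z₁ x + pd2 z₂ x ≤ 3)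
    (hz₁lo : ∀ x₂ ∈ Icc c (c + 1), z₁ (c, x₂) ≤ c)
    (hz₁hi : ∀ x₂ ∈ Icc c (c + 1), c + 1 ≤ z₁ (c + 1, x₂))
    (hz₂lo : ∀ x₁ ∈ Icc c (c + 1), z₂ (x₁, c) ≤ c)
    (hz₂hi : ∀ x₁ ∈ Icc c (c + 1), c + 1 ≤ z₂ (x₁, c + 1))
    -- (i) interior complementarity
    (hcomp₁ : ∀ᵐ x ∂(volume.restrict (box c)),
      u x = 0 ∨ pd1 z₁ x + pd2 z₂ x = 3)
    -- (ii) boundary complementarity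
    (hcomp₂ : ∀ᵐ x₂ ∂(volume.restrict (Icc c (c + 1))),
      (u (c, x₂) = 0 ∨ z₁ (c, x₂) = c) ∧
      (u (c + 1, x₂) = 0 ∨ z₁ (c + 1, x₂) = c + 1))
    (hcomp₂' : ∀ᵐ x₁ ∂(volume.restrict (Icc c (c + 1))),
      (u (x₁, c) = 0 ∨ z₂ (x₁, c) = c) ∧
      (u (x₁, c + 1) = 0 ∨ z₂ (x₁, c + 1) = c + 1))
    -- (iii) dual complementarity
    (hcomp₃ : ∀ᵐ x ∂(volume.restrict (box c)),
      (z₁ x = 0 ∨ pd1 u x = 1) ∧ (z₂ x = 0 ∨ pd2 u x = 1)) :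
    Rev c u = (∫ x in box c, (z₁ x + z₂ x)) ∧
    (∀ u' : ℝ × ℝ → ℝ, (∃ K : NNReal, LipschitzWith K u') →
      (∀ x ∈ box c, 0 ≤ u' x) →
      (∀ᵐ x ∂(volume.restrict (box c)), pd1 u' x ≤ 1 ∧ pd2 u' x ≤ 1) →
      Rev c u' ≤ Rev c u) ∧
    (∀ z₁' z₂' : ℝ × ℝ → ℝ,
      (∃ K : NNReal, LipschitzWith K z₁') → (∃ K : NNReal, LipschitzWith K z₂') →
      (∀ x ∈ box c, 0 ≤ z₁' x) → (∀ x ∈ box c, 0 ≤ z₂' x) →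
      (∀ᵐ x ∂(volume.restrict (box c)), pd1 z₁' x + pd2 z₂' x ≤ 3) →
      (∀ x₂ ∈ Icc c (c + 1), z₁' (c, x₂) ≤ c) →
      (∀ x₂ ∈ Icc c (c + 1), c + 1 ≤ z₁' (c + 1, x₂)) →
      (∀ x₁ ∈ Icc c (c + 1), z₂' (x₁, c) ≤ c) →
      (∀ x₁ ∈ Icc c (c + 1), c + 1 ≤ z₂' (x₁, c + 1)) →
      (∫ x in box c, (z₁ x + z₂ x)) ≤ ∫ x in box c, (z₁' x + z₂' x)) :=
  exact_complementarity_general c u huLip hunn huder z₁ z₂ hz₁Lip hz₂Lip hz₁nn hz₂nn hzder hz₁lo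
    hz₁hi hz₂lo hz₂hi hcomp₁ hcomp₂ hcomp₂' hcomp₃
end
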